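/- arXiv:2208.08095 — 2 statements merged into one kernel-verified Lean document; each statement's English description precedes it below -/
import Mathlib

section
/- Let R ≅ F_1 × ··· × F_n, where each F_i is a field and n ≥ 3 (equivalently, R is a reduced ring with n ≥ 3 maximal ideals and sdim_M(Γ(R)) finite). Then sdim_M(Γ(R)) = 2^n − 2n. -/
/-! Common definitions: metric/strong-metric dimension, strong resolving graph,
independence number, and the co-maximal ideal graph of a commutative ring. -/

namespace CoMax

variable {V : Type*}

/-- `S` is a resolving set for `G`: the metric representations with respect to `S`
of vertices outside `S` are pairwise distinct. -/
def IsResolvingSet (G : SimpleGraph V) (S : Set V) : Prop :=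
  ∀ u v : V, u ∉ S → v ∉ S → (∀ w ∈ S, G.dist u w = G.dist v w) → u = v

/-- The metric dimension of `G`: the smallest cardinality of a resolving set. -/
noncomputable def metricDim (G : SimpleGraph V) : Cardinal :=
  ⨅ S : {S : Set V // IsResolvingSet G S}, Cardinal.mk ↥(S.1)

/-- `w` strongly resolves `u` and `v`: there is a shortest path from `u` to `w`
containing `v`, or a shortest path from `v` to `w` containing `u`. -/
def StronglyResolves (G : SimpleGraph V) (w u v : V) : Prop :=
  G.dist u v + G.dist v w = G.dist u w ∨ G.dist v u + G.dist u w = G.dist v w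

/-- `S` is a strong resolving set for `G`: every pair of distinct vertices is
strongly resolved by some vertex of `S`. -/
def IsStrongResolvingSet (G : SimpleGraph V) (S : Set V) : Prop :=
  ∀ u v : V, u ≠ v → ∃ w ∈ S, StronglyResolves G w u v

/-- The strong metric dimension of `G`: the smallest cardinality of a strong
resolving set. -/
noncomputable def sdim (G : SimpleGraph V) : Cardinal :=
  ⨅ S : {S : Set V // IsStrongResolvingSet G S}, Cardinal.mk ↥(S.1)

/-- `u` is maximally distant from `v`: `d(v,w) ≤ d(u,v)` for every neighbor `w` of `u`. -/
def MaximallyDistantFrom (G : SimpleGraph V) (u v : V) : Prop :=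
  ∀ w : V, G.Adj u w → G.dist v w ≤ G.dist u v

/-- `u` and `v` are mutually maximally distant. -/
def MutuallyMaximallyDistant (G : SimpleGraph V) (u v : V) : Prop :=
  MaximallyDistantFrom G u v ∧ MaximallyDistantFrom G v u

/-- The boundary `∂(G)` of `G`. -/
def boundarySet (G : SimpleGraph V) : Set V :=
  {u | ∃ v, v ≠ u ∧ MutuallyMaximallyDistant G u v}

/-- The strong resolving graph `G_SR` of `G`: vertices are the boundary vertices,
two of them being adjacent iff they are mutually maximally distant. -/
def srGraph (G : SimpleGraph V) : SimpleGraph ↥(boundarySet G) where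
  Adj u v := u ≠ v ∧ MutuallyMaximallyDistant G u.1 v.1
  symm := ⟨fun u v h => ⟨h.1.symm, h.2.2, h.2.1⟩⟩
  loopless := ⟨fun u h => h.1 rfl⟩

/-- The independence number `β(G)` of `G`. -/
noncomputable def indepNum (G : SimpleGraph V) : ℕ :=
  sSup {k | ∃ S : Set V,
    (∀ u ∈ S, ∀ v ∈ S, u ≠ v → ¬ G.Adj u v) ∧ S.Finite ∧ S.ncard = k}

/-- The vertices of the co-maximal ideal graph of `R`: proper ideals of `R`
not contained in the Jacobson radical of `R`. -/
def IsComaxVertex (R : Type*) [CommRing R] (I : Ideal R) : Prop :=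
  I ≠ ⊤ ∧ ¬ I ≤ Ideal.jacobson (⊥ : Ideal R)

/-- The co-maximal ideal graph `Γ(R)`: distinct vertices `I`, `J` are adjacent
iff `I + J = R`. -/
def comaxGraph (R : Type*) [CommRing R] :
    SimpleGraph {I : Ideal R // IsComaxVertex R I} where
  Adj I J := I ≠ J ∧ I.1 ⊔ J.1 = ⊤
  symm := ⟨fun I J h => ⟨h.1.symm, by rw [sup_comm]; exact h.2⟩⟩
  loopless := ⟨fun I h => h.1 rfl⟩

/-- The graph `Γ(R)**`: same vertices as `Γ(R)`, with distinct `I`, `J` adjacent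
iff `I + J ≠ R`, `I ⊄ J` and `J ⊄ I`. -/
def comaxDoubleStar (R : Type*) [CommRing R] :
    SimpleGraph {I : Ideal R // IsComaxVertex R I} where
  Adj I J := I ≠ J ∧ I.1 ⊔ J.1 ≠ ⊤ ∧ ¬ I.1 ≤ J.1 ∧ ¬ J.1 ≤ I.1
  symm := ⟨fun I J h => ⟨h.1.symm, by rw [sup_comm]; exact h.2.1, h.2.2.2, h.2.2.1⟩⟩
  loopless := ⟨fun I h => h.1 rfl⟩

/-- The ideal of a product ring `Π i, R i` whose members are the elements all of
whose components lie in the given family of ideals. -/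
def piIdeal {ι : Type*} {R : ι → Type*} [∀ i, CommRing (R i)]
    (I : ∀ i, Ideal (R i)) : Ideal (∀ i, R i) where
  carrier := {x | ∀ i, x i ∈ I i}
  add_mem' := fun ha hb i => add_mem (ha i) (hb i)
  zero_mem' := fun i => zero_mem _
  smul_mem' := fun c x hx i => (I i).smul_mem (c i) (hx i)

/-- The `i`-th component of an ideal of a product ring. -/
def comp {ι : Type*} {R : ι → Type*} [∀ i, CommRing (R i)]
    (K : Ideal (∀ i, R i)) (i : ι) : Ideal (R i) :=
  K.map (Pi.evalRingHom R i)

/-- The relation `I ∼ J`: for each `i`, the `i`-th component of `I` consists of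
nilpotents iff the `i`-th component of `J` does. `[I] = [J]` iff `I ∼ J`. -/
def simRel {ι : Type*} {R : ι → Type*} [∀ i, CommRing (R i)]
    (I J : Ideal (∀ i, R i)) : Prop :=
  ∀ i, comp I i ≤ nilradical (R i) ↔ comp J i ≤ nilradical (R i)

open Classical in
/-- The ideal `I′` obtained from `I` by replacing all of its nilpotent components by `0`. -/
noncomputable def primed {ι : Type*} {R : ι → Type*} [∀ i, CommRing (R i)]
    (K : Ideal (∀ i, R i)) : Ideal (∀ i, R i) :=
  piIdeal fun i => if comp K i ≤ nilradical (R i) then ⊥ else comp K i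




open Finset

variable {n : ℕ}

def FVertex (n : ℕ) := {A : Finset (Fin n) // A ≠ ∅ ∧ A ≠ Finset.univ}

def fGraph (n : ℕ) : SimpleGraph (FVertex n) where
  Adj A B := A ≠ B ∧ A.1 ∪ B.1 = Finset.univ
  symm := ⟨fun A B h => ⟨h.1.symm, by rw [Finset.union_comm]; exact h.2⟩⟩
  loopless := ⟨fun A h => h.1 rfl⟩

lemma fAdj {A B : FVertex n} : (fGraph n).Adj A B ↔ A ≠ B ∧ A.1 ∪ B.1 = Finset.univ :=
  Iff.rfl

lemma fv_ne_of_mem {A B : FVertex n} {x : Fin n} (hx : x ∈ A.1) (hx' : x ∉ B.1) : A ≠ B :=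
  fun h => hx' (h ▸ hx)

lemma exists_ne_fin (hn : 3 ≤ n) (x : Fin n) : ∃ y : Fin n, y ≠ x := by
  rcases eq_or_ne x.val 0 with h | h
  · exact ⟨⟨1, by omega⟩, by intro hy; rw [Fin.ext_iff] at hy; simp at hy; omega⟩
  · exact ⟨⟨0, by omega⟩, by intro hy; rw [Fin.ext_iff] at hy; simp at hy; omega⟩

def coSing (hn : 3 ≤ n) (x : Fin n) : FVertex n := by
  refine ⟨Finset.univ.erase x, ?_, ?_⟩
  · obtain ⟨y, hy⟩ := exists_ne_fin hn x
    exact Finset.ne_empty_of_mem (Finset.mem_erase.2 ⟨hy, Finset.mem_univ y⟩)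
  · intro h
    have := h ▸ (Finset.notMem_erase x Finset.univ)
    exact this (Finset.mem_univ x)

lemma mem_coSing (hn : 3 ≤ n) {x y : Fin n} : y ∈ (coSing hn x).1 ↔ y ≠ x := by
  simp [coSing]

lemma adj_coSing_left (hn : 3 ≤ n) {A : FVertex n} {x : Fin n} (hx : x ∈ A.1) :
    (fGraph n).Adj A (coSing hn x) := by
  refine ⟨fv_ne_of_mem hx (by simp [mem_coSing]), ?_⟩
  apply Finset.eq_univ_iff_forall.2
  intro y
  rcases eq_or_ne y x with rfl | hy
  · exact Finset.mem_union.2 (Or.inl hx)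
  · exact Finset.mem_union.2 (Or.inr ((mem_coSing hn).2 hy))

/-- The walk `A — (univ.erase x) — B` for `x ∈ A ∩ B`. -/
lemma walk2 (hn : 3 ≤ n) {A B : FVertex n} (h : (A.1 ∩ B.1).Nonempty) :
    ∃ p : (fGraph n).Walk A B, p.length = 2 := by
  obtain ⟨x, hx⟩ := h
  rw [Finset.mem_inter] at hx
  exact ⟨SimpleGraph.Walk.cons (adj_coSing_left hn hx.1)
    (SimpleGraph.Walk.cons ((adj_coSing_left hn hx.2).symm) .nil), rfl⟩

lemma dist_le_two (hn : 3 ≤ n) {A B : FVertex n} (h : (A.1 ∩ B.1).Nonempty) :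
    (fGraph n).dist A B ≤ 2 := by
  obtain ⟨p, hp⟩ := walk2 hn h
  exact hp ▸ SimpleGraph.dist_le p

lemma reachable_of_inter (hn : 3 ≤ n) {A B : FVertex n} (h : (A.1 ∩ B.1).Nonempty) :
    (fGraph n).Reachable A B := by
  obtain ⟨p, _⟩ := walk2 hn h
  exact ⟨p⟩

/-- The complement vertex. -/
def complV {n : ℕ} (A : FVertex n) : FVertex n := by
  refine ⟨A.1ᶜ, ?_, ?_⟩
  · intro h
    have : A.1 = Finset.univ := by
      have := congrArg (·ᶜ) h
      simpa using this
    exact A.2.2 this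
  · intro h
    have : A.1 = ∅ := by
      have := congrArg (·ᶜ) h
      simpa using this
    exact A.2.1 this

lemma adj_complV {n : ℕ} (A : FVertex n) : (fGraph n).Adj A (complV A) := by
  obtain ⟨x, hx⟩ := Finset.nonempty_iff_ne_empty.2 A.2.1
  refine ⟨fv_ne_of_mem hx (by simp [complV, hx]), by simp [complV]⟩

lemma fPreconnected (hn : 3 ≤ n) : (fGraph n).Preconnected := by
  intro A B
  rcases Finset.eq_empty_or_nonempty (A.1 ∩ B.1) with h | h
  · refine ((adj_complV A).reachable).trans (reachable_of_inter hn ?_)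
    obtain ⟨x, hx⟩ := Finset.nonempty_iff_ne_empty.2 B.2.1
    refine ⟨x, Finset.mem_inter.2 ⟨?_, hx⟩⟩
    simp only [complV, Finset.mem_compl]
    intro hxA
    exact (Finset.eq_empty_iff_forall_notMem.1 h x) (Finset.mem_inter.2 ⟨hxA, hx⟩)
  · exact reachable_of_inter hn h

lemma fNonempty (hn : 3 ≤ n) : Nonempty (FVertex n) := by
  have h0 : (0 : ℕ) < n := by omega
  refine ⟨⟨{⟨0, h0⟩}, ?_, ?_⟩⟩
  · simp
  · intro h
    have : (⟨1, by omega⟩ : Fin n) ∈ ({(⟨0, h0⟩ : Fin n)} : Finset (Fin n)) := by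
      rw [h]; exact Finset.mem_univ _
    rw [Finset.mem_singleton, Fin.ext_iff] at this
    simp at this

lemma fConnected (hn : 3 ≤ n) : (fGraph n).Connected := by
  have := fNonempty hn
  exact ⟨fPreconnected hn⟩

lemma dist_one {A B : FVertex n} (h : (fGraph n).Adj A B) : (fGraph n).dist A B = 1 :=
  SimpleGraph.dist_eq_one_iff_adj.2 h

lemma two_le_dist (hn : 3 ≤ n) {A B : FVertex n} (hne : A ≠ B)
    (hu : A.1 ∪ B.1 ≠ Finset.univ) : 2 ≤ (fGraph n).dist A B := by
  have h0 : (fGraph n).dist A B ≠ 0 := by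
    have := (fConnected hn).pos_dist_of_ne hne
    omega
  have h1 : (fGraph n).dist A B ≠ 1 := by
    intro h
    exact hu (SimpleGraph.dist_eq_one_iff_adj.1 h).2
  omega

lemma dist_two (hn : 3 ≤ n) {A B : FVertex n} (hne : A ≠ B)
    (hu : A.1 ∪ B.1 ≠ Finset.univ) (hi : (A.1 ∩ B.1).Nonempty) :
    (fGraph n).dist A B = 2 :=
  le_antisymm (dist_le_two hn hi) (two_le_dist hn hne hu)

lemma three_le_dist (hn : 3 ≤ n) {A B : FVertex n} (hi : A.1 ∩ B.1 = ∅)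
    (hu : A.1 ∪ B.1 ≠ Finset.univ) : 3 ≤ (fGraph n).dist A B := by
  have hne : A ≠ B := by
    intro h
    subst h
    rw [Finset.inter_self] at hi
    exact A.2.1 hi
  have h2 := two_le_dist hn hne hu
  rcases Nat.lt_or_ge ((fGraph n).dist A B) 3 with h | h
  · exfalso
    have hd : (fGraph n).dist A B = 2 := by omega
    obtain ⟨p, hp⟩ := (fConnected hn).exists_walk_length_eq_dist A B
    rw [hd] at hp
    -- p has length 2 : A — W — B
    cases p with
    | nil => simp at hp
    | cons hadj q =>
      cases q with
      | nil => simp at hp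
      | cons hadj' q' =>
        cases q' with
        | nil =>
          -- hadj : Adj A W, hadj' : Adj W B
          rename_i W
          have hW : W.1 = Finset.univ := by
            apply Finset.eq_univ_iff_forall.2
            intro x
            by_cases hxA : x ∈ A.1
            · have hxB : x ∉ B.1 := fun hxB =>
                (Finset.eq_empty_iff_forall_notMem.1 hi x) (Finset.mem_inter.2 ⟨hxA, hxB⟩)
              have := hadj'.2
              have hx := Finset.eq_univ_iff_forall.1 this x
              rcases Finset.mem_union.1 hx with h' | h'
              · exact h'
              · exact absurd h' hxB
            · have := hadj.2
              have hx := Finset.eq_univ_iff_forall.1 this x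
              rcases Finset.mem_union.1 hx with h' | h'
              · exact absurd h' hxA
              · exact h'
          exact W.2.2 hW
        | cons h'' q'' => simp [SimpleGraph.Walk.length_cons] at hp
  · exact h

lemma dist_three (hn : 3 ≤ n) {A B : FVertex n} (hi : A.1 ∩ B.1 = ∅)
    (hu : A.1 ∪ B.1 ≠ Finset.univ) : (fGraph n).dist A B = 3 := by
  refine le_antisymm ?_ (three_le_dist hn hi hu)
  obtain ⟨x, hx⟩ := Finset.nonempty_iff_ne_empty.2 B.2.1
  have hxA : x ∉ A.1 := fun h =>
    (Finset.eq_empty_iff_forall_notMem.1 hi x) (Finset.mem_inter.2 ⟨h, hx⟩)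
  have h1 : (fGraph n).Adj A (complV A) := adj_complV A
  have h2 : (fGraph n).Adj (complV A) (coSing hn x) := by
    refine ⟨?_, ?_⟩
    · refine fv_ne_of_mem (show x ∈ (complV A).1 by simp [complV, hxA]) ?_
      simp [mem_coSing]
    · apply Finset.eq_univ_iff_forall.2
      intro y
      rcases eq_or_ne y x with rfl | hy
      · exact Finset.mem_union.2 (Or.inl (by simp [complV, hxA]))
      · exact Finset.mem_union.2 (Or.inr ((mem_coSing hn).2 hy))
  have h3 : (fGraph n).Adj (coSing hn x) B := (adj_coSing_left hn hx).symm
  calc (fGraph n).dist A B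
      ≤ (SimpleGraph.Walk.cons h1 (SimpleGraph.Walk.cons h2
          (SimpleGraph.Walk.cons h3 .nil))).length := SimpleGraph.dist_le _
    _ = 3 := rfl

lemma dist_le_three (hn : 3 ≤ n) (A B : FVertex n) : (fGraph n).dist A B ≤ 3 := by
  rcases eq_or_ne A B with rfl | hne
  · simp [SimpleGraph.dist_self]
  rcases Finset.eq_empty_or_nonempty (A.1 ∩ B.1) with h | h
  · by_cases hu : A.1 ∪ B.1 = Finset.univ
    · rw [dist_one ⟨hne, hu⟩]; omega
    · rw [dist_three hn h hu]
  · have := dist_le_two hn h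
    omega





/-- If `d(u,v) + d(v,w) = d(u,w)` and `v` is maximally distant from `u`, then `w = v`. -/
lemma eq_of_geodesic_mdf {G : SimpleGraph V} (hc : G.Connected) {u v w : V}
    (hmdf : MaximallyDistantFrom G v u)
    (h : G.dist u v + G.dist v w = G.dist u w) : w = v := by
  by_contra hne
  have hpos : 0 < G.dist v w := hc.pos_dist_of_ne (fun h' => hne h'.symm)
  obtain ⟨p, hp⟩ := hc.exists_walk_length_eq_dist v w
  cases p with
  | nil => simp at hp; omega
  | cons hadj q =>
    rename_i x
    have h2 : G.dist x w ≤ G.dist v w - 1 := by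
      have := SimpleGraph.dist_le q
      rw [SimpleGraph.Walk.length_cons] at hp
      omega
    have h3 : G.dist u x ≤ G.dist v u := hmdf x hadj
    have h4 : G.dist u w ≤ G.dist u x + G.dist x w := hc.dist_triangle
    rw [SimpleGraph.dist_comm (u := v) (v := u)] at h3
    omega

lemma eq_of_stronglyResolves_mmd {G : SimpleGraph V} (hc : G.Connected) {u v w : V}
    (h : MutuallyMaximallyDistant G u v) (hw : StronglyResolves G w u v) :
    w = u ∨ w = v := by
  rcases hw with h1 | h1
  · exact Or.inr (eq_of_geodesic_mdf hc h.2 h1)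
  · exact Or.inl (eq_of_geodesic_mdf hc h.1 h1)

/-- The laminar family cardinality bound. -/
lemma laminar_card_bound {ι : Type*} [DecidableEq ι] (L : Finset (Finset ι)) :
    ∀ X : Finset ι, (∀ A ∈ L, A ≠ ∅) → (∀ A ∈ L, A ⊆ X) →
    (∀ A ∈ L, ∀ B ∈ L, A ∩ B = ∅ ∨ A ⊆ B ∨ B ⊆ A) →
    L.card ≤ 2 * X.card - 1 ∧ (X ∉ L → L.card ≤ 2 * X.card - 2) := by
  induction L using Finset.strongInduction with
  | _ L IH =>
    intro X hne hsub hlam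
    rcases Finset.eq_empty_or_nonempty L with rfl | hLne
    · simp
    obtain ⟨A, hA, hAmax⟩ := Finset.exists_max_image L Finset.card hLne
    classical
    set L1 : Finset (Finset ι) := (L.erase A).filter (· ⊆ A) with hL1
    set L2 : Finset (Finset ι) := (L.erase A).filter (fun B => ¬ B ⊆ A) with hL2
    have hL1sub : L1 ⊂ L := by
      refine Finset.ssubset_iff_of_subset ((Finset.filter_subset _ _).trans (Finset.erase_subset _ _)) |>.2 ?_
      exact ⟨A, hA, fun h => (Finset.mem_erase.1 (Finset.mem_filter.1 h).1).1 rfl⟩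
    have hL2sub : L2 ⊂ L := by
      refine Finset.ssubset_iff_of_subset ((Finset.filter_subset _ _).trans (Finset.erase_subset _ _)) |>.2 ?_
      exact ⟨A, hA, fun h => (Finset.mem_erase.1 (Finset.mem_filter.1 h).1).1 rfl⟩
    have hcard : L.card = 1 + L1.card + L2.card := by
      have h1 : L1.card + L2.card = (L.erase A).card := by
        rw [hL1, hL2]
        exact Finset.card_filter_add_card_filter_not (fun B => B ⊆ A)
      have h2 : (L.erase A).card = L.card - 1 := Finset.card_erase_of_mem hA
      have h3 : 1 ≤ L.card := Finset.card_pos.2 hLne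
      omega
    -- L1 : subsets of A, not containing A
    have hIH1 := IH L1 hL1sub A
      (fun B hB => hne B (Finset.mem_of_mem_erase (Finset.mem_filter.1 hB).1))
      (fun B hB => (Finset.mem_filter.1 hB).2)
      (fun B hB C hC => hlam B (Finset.mem_of_mem_erase (Finset.mem_filter.1 hB).1)
        C (Finset.mem_of_mem_erase (Finset.mem_filter.1 hC).1))
    have hA_not_L1 : A ∉ L1 := fun h => (Finset.mem_erase.1 (Finset.mem_filter.1 h).1).1 rfl
    have hc1 : L1.card ≤ 2 * A.card - 2 := hIH1.2 hA_not_L1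
    -- L2 : subsets of X \ A
    have hL2disj : ∀ B ∈ L2, B ⊆ X \ A := by
      intro B hB
      have hBL : B ∈ L := Finset.mem_of_mem_erase (Finset.mem_filter.1 hB).1
      have hBA : ¬ B ⊆ A := (Finset.mem_filter.1 hB).2
      have hBne : B ≠ A := (Finset.mem_erase.1 (Finset.mem_filter.1 hB).1).1
      rcases hlam B hBL A hA with h | h | h
      · intro x hx
        rw [Finset.mem_sdiff]
        refine ⟨hsub B hBL hx, fun hxA => ?_⟩
        exact (Finset.eq_empty_iff_forall_notMem.1 h x) (Finset.mem_inter.2 ⟨hx, hxA⟩)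
      · exact absurd h hBA
      · -- A ⊆ B, B ≠ A : contradicts maximality
        exfalso
        have : A ⊂ B := Finset.ssubset_iff_subset_ne.2 ⟨h, hBne.symm⟩
        have := Finset.card_lt_card this
        have := hAmax B hBL
        omega
    have hIH2 := IH L2 hL2sub (X \ A)
      (fun B hB => hne B (Finset.mem_of_mem_erase (Finset.mem_filter.1 hB).1))
      hL2disj
      (fun B hB C hC => hlam B (Finset.mem_of_mem_erase (Finset.mem_filter.1 hB).1)
        C (Finset.mem_of_mem_erase (Finset.mem_filter.1 hC).1))
    have hc2 : L2.card ≤ 2 * (X.card - A.card) - 1 := by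
      have := hIH2.1
      rwa [Finset.card_sdiff_of_subset (hsub A hA)] at this
    have hApos : 1 ≤ A.card := Finset.card_pos.2 (Finset.nonempty_iff_ne_empty.2 (hne A hA))
    have hAX : A.card ≤ X.card := Finset.card_le_card (hsub A hA)
    constructor
    · omega
    · intro hX
      have hAX' : A.card < X.card := by
        have : A ≠ X := fun h => hX (h ▸ hA)
        have := Finset.card_lt_card (Finset.ssubset_iff_subset_ne.2 ⟨hsub A hA, this⟩)
        omega
      omega


open Finset in
lemma mmd_of (hn : 3 ≤ n) {A B : FVertex n} (hu : A.1 ∪ B.1 ≠ Finset.univ)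
    (h1 : ¬ A.1 ⊆ B.1) (h2 : ¬ B.1 ⊆ A.1) :
    MutuallyMaximallyDistant (fGraph n) A B := by
  have key : ∀ C D : FVertex n, C.1 ∪ D.1 ≠ Finset.univ → ¬ C.1 ⊆ D.1 → ¬ D.1 ⊆ C.1 →
      MaximallyDistantFrom (fGraph n) C D := by
    intro C D hu h1 h2 W hadj
    rcases Finset.eq_empty_or_nonempty (C.1 ∩ D.1) with hi | hi
    · rw [dist_three hn hi hu]
      exact dist_le_three hn D W
    · rw [dist_two hn (fun h => h1 (by rw [h])) hu hi]
      -- find x ∈ D \ C; then x ∈ W since C ∪ W = univ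
      obtain ⟨x, hxD, hxC⟩ := Finset.not_subset.1 h2
      have hxW : x ∈ W.1 := by
        have := Finset.eq_univ_iff_forall.1 hadj.2 x
        rcases Finset.mem_union.1 this with h | h
        · exact absurd h hxC
        · exact h
      exact dist_le_two hn ⟨x, Finset.mem_inter.2 ⟨hxD, hxW⟩⟩
  refine ⟨key A B hu h1 h2, key B A (by rwa [Finset.union_comm]) h2 h1⟩

instance : DecidableEq (FVertex n) := by unfold FVertex; infer_instance
instance : Fintype (FVertex n) := by unfold FVertex; infer_instance

lemma card_FVertex (hn : 3 ≤ n) : Fintype.card (FVertex n) = 2 ^ n - 2 := by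
  have h0 : (0:ℕ) < n := by omega
  have : Fintype.card (FVertex n)
      = (Finset.univ.filter (fun A : Finset (Fin n) => A ≠ ∅ ∧ A ≠ Finset.univ)).card := by
    rw [← Fintype.card_subtype]
    rfl
  rw [this]
  have heq : Finset.univ.filter (fun A : Finset (Fin n) => A ≠ ∅ ∧ A ≠ Finset.univ)
      = Finset.univ \ ({∅, Finset.univ} : Finset (Finset (Fin n))) := by
    ext A
    simp only [Finset.mem_filter, Finset.mem_sdiff, Finset.mem_univ, true_and,
      Finset.mem_insert, Finset.mem_singleton]
    tauto
  rw [heq, Finset.card_sdiff_of_subset (Finset.subset_univ _)]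
  have hne : (∅ : Finset (Fin n)) ≠ Finset.univ := by
    intro h
    have : (⟨0, h0⟩ : Fin n) ∈ (∅ : Finset (Fin n)) := by rw [h]; exact Finset.mem_univ _
    simp at this
  rw [Finset.card_pair hne, Finset.card_univ, Fintype.card_finset, Fintype.card_fin]

lemma two_mul_add_two_le : ∀ n, 3 ≤ n → 2 * n + 2 ≤ 2 ^ n := by
  intro n hn
  induction n with
  | zero => omega
  | succ m IH =>
    rcases Nat.lt_or_ge m 3 with h | h
    · interval_cases m <;> simp_all <;> omega
    · have := IH (by omega)
      have : 2 ^ (m + 1) = 2 * 2 ^ m := by ring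
      have h2 : 2 ^ m ≥ 2 * m + 2 := IH (by omega)
      omega

open scoped Classical in
open Finset in
lemma lower_bound_card (hn : 3 ≤ n) (S : Set (FVertex n))
    (hS : IsStrongResolvingSet (fGraph n) S) :
    2 ^ n - 2 * n ≤ (Finset.univ.filter (fun A : FVertex n => A ∈ S)).card := by
  classical
  set C : Finset (FVertex n) := Finset.univ.filter (fun A => A ∉ S) with hC
  set L : Finset (Finset (Fin n)) := C.image (fun A => A.1ᶜ) with hL
  have hnoMMD : ∀ A ∈ C, ∀ B ∈ C, A ≠ B →
      A.1 ∪ B.1 = Finset.univ ∨ A.1 ⊆ B.1 ∨ B.1 ⊆ A.1 := by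
    intro A hA B hB hne
    by_contra hcon
    push_neg at hcon
    obtain ⟨h1, h2, h3⟩ := hcon
    obtain ⟨w, hwS, hw⟩ := hS A B hne
    rcases eq_of_stronglyResolves_mmd (fConnected hn) (mmd_of hn h1 h2 h3) hw with rfl | rfl
    · exact (Finset.mem_filter.1 hA).2 hwS
    · exact (Finset.mem_filter.1 hB).2 hwS
  have hlam : ∀ a ∈ L, ∀ b ∈ L, a ∩ b = ∅ ∨ a ⊆ b ∨ b ⊆ a := by
    intro a ha b hb
    obtain ⟨A, hA, rfl⟩ := Finset.mem_image.1 ha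
    obtain ⟨B, hB, rfl⟩ := Finset.mem_image.1 hb
    rcases eq_or_ne A B with rfl | hne
    · exact Or.inr (Or.inl subset_rfl)
    rcases hnoMMD A hA B hB hne with h | h | h
    · left
      rw [← Finset.compl_union, h, Finset.compl_univ]
    · exact Or.inr (Or.inr (Finset.compl_subset_compl.2 h))
    · exact Or.inr (Or.inl (Finset.compl_subset_compl.2 h))
  have hLbound : L.card ≤ 2 * n - 2 := by
    have := (laminar_card_bound L Finset.univ
      (fun a ha => by
        obtain ⟨A, _, rfl⟩ := Finset.mem_image.1 ha
        intro h
        exact A.2.2 (by simpa using congrArg (·ᶜ) h))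
      (fun a _ => Finset.subset_univ a) hlam).2
      (fun h => by
        obtain ⟨A, _, hA⟩ := Finset.mem_image.1 h
        exact A.2.1 (by simpa using congrArg (·ᶜ) hA))
    rwa [Finset.card_univ, Fintype.card_fin] at this
  have hCL : C.card = L.card := by
    rw [hL]
    rw [Finset.card_image_of_injOn]
    intro A _ B _ h
    exact Subtype.ext (compl_injective h)
  have hsplit := Finset.card_filter_add_card_filter_not
    (s := (Finset.univ : Finset (FVertex n))) (p := fun A => A ∈ S)
  have hCeq : C.card = (Finset.univ.filter (fun a : FVertex n => ¬ a ∈ S)).card := by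
    rw [hC]
  have huniv : (Finset.univ : Finset (FVertex n)).card = Fintype.card (FVertex n) :=
    Finset.card_univ
  have hcard := card_FVertex hn
  have hpow := two_mul_add_two_le n hn
  omega


open Finset

/-- `{0,...,k}` as a subset of `Fin n`. -/
def ekSet (n k : ℕ) : Finset (Fin n) := Finset.univ.filter (fun i => (i : ℕ) ≤ k)

lemma mem_ekSet {n k : ℕ} {i : Fin n} : i ∈ ekSet n k ↔ (i : ℕ) ≤ k := by
  simp [ekSet]

/-- The independent family: co-singletons plus the chain `ekSet k`, `k < n-2`. -/
def I0 (n : ℕ) : Finset (Finset (Fin n)) :=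
  (Finset.univ.image (fun x : Fin n => Finset.univ.erase x)) ∪
    ((Finset.range (n - 2)).image (ekSet n))

lemma mem_I0 {n : ℕ} {B : Finset (Fin n)} :
    B ∈ I0 n ↔ (∃ x, B = Finset.univ.erase x) ∨ ∃ k < n - 2, B = ekSet n k := by
  simp only [I0, Finset.mem_union, Finset.mem_image, Finset.mem_univ, true_and,
    Finset.mem_range]
  constructor
  · rintro (⟨x, hx⟩ | ⟨k, hk, hB⟩)
    · exact Or.inl ⟨x, hx.symm⟩
    · exact Or.inr ⟨k, hk, hB.symm⟩
  · rintro (⟨x, hx⟩ | ⟨k, hk, hB⟩)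
    · exact Or.inl ⟨x, hx.symm⟩
    · exact Or.inr ⟨k, hk, hB.symm⟩

lemma not_mem_I0 {n : ℕ} (hn : 3 ≤ n) {w : Finset (Fin n)}
    (h0 : (⟨0, by omega⟩ : Fin n) ∉ w) {y : Fin n} (hy : y ∉ w) (hy0 : (y : ℕ) ≠ 0) :
    w ∉ I0 n := by
  intro h
  rcases mem_I0.1 h with ⟨x, rfl⟩ | ⟨k, hk, rfl⟩
  · have h1 : (⟨0, by omega⟩ : Fin n) = x := by
      by_contra hne
      exact h0 (Finset.mem_erase.2 ⟨hne, Finset.mem_univ _⟩)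
    have h2 : y = x := by
      by_contra hne
      exact hy (Finset.mem_erase.2 ⟨hne, Finset.mem_univ _⟩)
    rw [← h2] at h1
    rw [Fin.ext_iff] at h1
    simp at h1
    omega
  · exact h0 (mem_ekSet.2 (by simp))

lemma singleton_not_mem_I0 {n : ℕ} (hn : 3 ≤ n) {j : Fin n} (hj : (j : ℕ) ≠ 0) :
    ({j} : Finset (Fin n)) ∉ I0 n := by
  have hjlt := j.isLt
  -- pick y ∉ {j}, y ≠ 0
  by_cases h1 : (j : ℕ) = 1
  · refine not_mem_I0 hn ?_ (y := ⟨2, by omega⟩) ?_ (by simp)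
    · simp [Fin.ext_iff]; omega
    · simp [Fin.ext_iff]; omega
  · refine not_mem_I0 hn ?_ (y := ⟨1, by omega⟩) ?_ (by simp)
    · simp [Fin.ext_iff]; omega
    · simp [Fin.ext_iff]; omega

lemma sr_symm {V : Type*} {G : SimpleGraph V} {w u v : V}
    (h : StronglyResolves G w u v) : StronglyResolves G w v u := h.symm

lemma exists_third {n : ℕ} (hn : 3 ≤ n) (i j : Fin n) : ∃ y : Fin n, y ≠ i ∧ y ≠ j := by
  have hi := i.isLt
  have hj := j.isLt
  by_cases h0 : (i : ℕ) ≠ 0 ∧ (j : ℕ) ≠ 0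
  · exact ⟨⟨0, by omega⟩, by simp [Fin.ext_iff]; omega, by simp [Fin.ext_iff]; omega⟩
  by_cases h1 : (i : ℕ) ≠ 1 ∧ (j : ℕ) ≠ 1
  · exact ⟨⟨1, by omega⟩, by simp [Fin.ext_iff]; omega, by simp [Fin.ext_iff]; omega⟩
  · push_neg at h0 h1
    refine ⟨⟨2, by omega⟩, ?_, ?_⟩ <;> simp [Fin.ext_iff] <;> omega

/-- Case 1 : both co-singletons. -/
lemma resolve_cs_cs {n : ℕ} (hn : 3 ≤ n) (u v : FVertex n) (i j : Fin n)
    (hu : u.1 = Finset.univ.erase i) (hv : v.1 = Finset.univ.erase j)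
    (hij : i ≠ j) (hj0 : (j : ℕ) ≠ 0) :
    ∃ w : FVertex n, w.1 ∉ I0 n ∧ StronglyResolves (fGraph n) w u v := by
  have hjlt := j.isLt
  have hw2 : ({j} : Finset (Fin n)) ≠ Finset.univ := by
    intro h
    have : (⟨0, by omega⟩ : Fin n) ∈ ({j} : Finset (Fin n)) := h ▸ Finset.mem_univ _
    rw [Finset.mem_singleton, Fin.ext_iff] at this
    simp at this; omega
  obtain ⟨wv, hwv⟩ : ∃ w : FVertex n, w.1 = {j} :=
    ⟨⟨{j}, Finset.singleton_ne_empty j, hw2⟩, rfl⟩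
  refine ⟨wv, by rw [hwv]; exact singleton_not_mem_I0 hn hj0, ?_⟩
  left
  have hduv : (fGraph n).dist u v = 1 := by
    refine dist_one ⟨?_, ?_⟩
    · refine (fv_ne_of_mem (show i ∈ v.1 by rw [hv]; exact Finset.mem_erase.2 ⟨hij, Finset.mem_univ _⟩)
        (show i ∉ u.1 by rw [hu]; exact Finset.notMem_erase i _)).symm
    · rw [hu, hv]
      apply Finset.eq_univ_iff_forall.2
      intro x
      rcases eq_or_ne x i with rfl | hx
      · exact Finset.mem_union.2 (Or.inr (Finset.mem_erase.2 ⟨hij, Finset.mem_univ _⟩))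
      · exact Finset.mem_union.2 (Or.inl (Finset.mem_erase.2 ⟨hx, Finset.mem_univ _⟩))
  have hdvw : (fGraph n).dist v wv = 1 := by
    refine dist_one ⟨?_, ?_⟩
    · exact (fv_ne_of_mem (show j ∈ wv.1 by rw [hwv]; exact Finset.mem_singleton_self j)
        (show j ∉ v.1 by rw [hv]; exact Finset.notMem_erase j _)).symm
    · rw [hv, hwv]
      apply Finset.eq_univ_iff_forall.2
      intro x
      rcases eq_or_ne x j with rfl | hx
      · exact Finset.mem_union.2 (Or.inr (Finset.mem_singleton_self _))
      · exact Finset.mem_union.2 (Or.inl (Finset.mem_erase.2 ⟨hx, Finset.mem_univ _⟩))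
  have hduw : (fGraph n).dist u wv = 2 := by
    obtain ⟨y, hyi, hyj⟩ := exists_third hn i j
    refine dist_two hn ?_ ?_ ?_
    · exact fv_ne_of_mem (show y ∈ u.1 by rw [hu]; exact Finset.mem_erase.2 ⟨hyi, Finset.mem_univ _⟩)
        (show y ∉ wv.1 by rw [hwv]; simpa using hyj)
    · rw [hu, hwv]
      intro h
      have := Finset.eq_univ_iff_forall.1 h i
      rcases Finset.mem_union.1 this with h' | h'
      · exact (Finset.notMem_erase i _) h'
      · rw [Finset.mem_singleton] at h'; exact hij h'
    · refine ⟨j, Finset.mem_inter.2 ⟨?_, by rw [hwv]; exact Finset.mem_singleton_self j⟩⟩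
      rw [hu]; exact Finset.mem_erase.2 ⟨Ne.symm hij, Finset.mem_univ _⟩
  rw [hduv, hdvw, hduw]

/-- Case 3a : `u = ekSet k`, `v = erase i`, `i ≤ k < n-2`. -/
lemma resolve_ek_cs_le {n : ℕ} (hn : 3 ≤ n) (u v : FVertex n) (k : ℕ) (i : Fin n)
    (hu : u.1 = ekSet n k) (hv : v.1 = Finset.univ.erase i)
    (hk : k < n - 2) (hik : (i : ℕ) ≤ k) :
    ∃ w : FVertex n, w.1 ∉ I0 n ∧ StronglyResolves (fGraph n) w u v := by
  have hilt := i.isLt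
  -- w = {x : k+2 ≤ x}
  obtain ⟨wv, hwv⟩ : ∃ w : FVertex n, w.1 = Finset.univ.filter (fun x : Fin n => k + 2 ≤ (x : ℕ)) := by
    refine ⟨⟨_, ?_, ?_⟩, rfl⟩
    · apply Finset.ne_empty_of_mem (a := ⟨n-1, by omega⟩)
      simp; omega
    · intro h
      have := Finset.eq_univ_iff_forall.1 h ⟨0, by omega⟩
      simp at this
  refine ⟨wv, ?_, ?_⟩
  · rw [hwv]
    refine not_mem_I0 hn (by simp) (y := ⟨k+1, by omega⟩) (by simp) (by simp)
  left
  have hduv : (fGraph n).dist u v = 1 := by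
    refine dist_one ⟨?_, ?_⟩
    · refine (fv_ne_of_mem (x := (⟨n-1, by omega⟩ : Fin n)) (A := v) (B := u) ?_ ?_).symm
      · rw [hv]; simp [Fin.ext_iff]; omega
      · rw [hu]; simp [mem_ekSet]; omega
    · rw [hu, hv]
      apply Finset.eq_univ_iff_forall.2
      intro x
      have := x.isLt
      simp only [Finset.mem_union, mem_ekSet, Finset.mem_erase, Finset.mem_univ, and_true,
        ne_eq, Fin.ext_iff]
      omega
  have hdvw : (fGraph n).dist v wv = 2 := by
    refine dist_two hn ?_ ?_ ?_
    · refine fv_ne_of_mem (x := (⟨k+1, by omega⟩ : Fin n)) (A := v) (B := wv) ?_ ?_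
      · rw [hv]; simp [Fin.ext_iff]; omega
      · rw [hwv]; simp
    · rw [hv, hwv]
      intro h
      have := Finset.eq_univ_iff_forall.1 h i
      simp [Fin.ext_iff] at this
      omega
    · refine ⟨⟨n-1, by omega⟩, Finset.mem_inter.2 ⟨?_, ?_⟩⟩
      · rw [hv]; simp [Fin.ext_iff]; omega
      · rw [hwv]; simp; omega
  have hduw : (fGraph n).dist u wv = 3 := by
    refine dist_three hn ?_ ?_
    · rw [hu, hwv]
      apply Finset.eq_empty_iff_forall_notMem.2
      intro x
      simp [mem_ekSet]
      omega
    · rw [hu, hwv]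
      intro h
      have := Finset.eq_univ_iff_forall.1 h ⟨k+1, by omega⟩
      simp [mem_ekSet] at this
  rw [hduv, hdvw, hduw]

/-- Case 3b : `u = ekSet k`, `v = erase i`, `k < i`. -/
lemma resolve_ek_cs_gt {n : ℕ} (hn : 3 ≤ n) (u v : FVertex n) (k : ℕ) (i : Fin n)
    (hu : u.1 = ekSet n k) (hv : v.1 = Finset.univ.erase i)
    (hk : k < n - 2) (hik : k < (i : ℕ)) :
    ∃ w : FVertex n, w.1 ∉ I0 n ∧ StronglyResolves (fGraph n) w u v := by
  have hilt := i.isLt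
  -- z : an element with z ≠ i and k < z
  obtain ⟨z, hzi, hzk⟩ : ∃ z : Fin n, z ≠ i ∧ k < (z : ℕ) := by
    rcases eq_or_ne (i : ℕ) (n-1) with h | h
    · exact ⟨⟨k+1, by omega⟩, by simp [Fin.ext_iff]; omega, by simp⟩
    · exact ⟨⟨n-1, by omega⟩, by simp [Fin.ext_iff]; omega, by simp; omega⟩
  obtain ⟨wv, hwv⟩ : ∃ w : FVertex n, w.1 = {i} := by
    refine ⟨⟨_, Finset.singleton_ne_empty i, ?_⟩, rfl⟩
    intro h
    have : z ∈ ({i} : Finset (Fin n)) := h ▸ Finset.mem_univ _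
    rw [Finset.mem_singleton] at this
    exact hzi this
  refine ⟨wv, ?_, ?_⟩
  · rw [hwv]
    exact singleton_not_mem_I0 hn (by omega)
  left
  have hduv : (fGraph n).dist u v = 2 := by
    refine dist_two hn ?_ ?_ ?_
    · refine (fv_ne_of_mem (x := z) (A := v) (B := u) ?_ ?_).symm
      · rw [hv]; exact Finset.mem_erase.2 ⟨hzi, Finset.mem_univ _⟩
      · rw [hu]; simp [mem_ekSet]; omega
    · rw [hu, hv]
      intro h
      have := Finset.eq_univ_iff_forall.1 h i
      simp [mem_ekSet] at this
      omega
    · refine ⟨⟨0, by omega⟩, Finset.mem_inter.2 ⟨?_, ?_⟩⟩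
      · rw [hu]; simp [mem_ekSet]
      · rw [hv]; simp [Fin.ext_iff]; omega
  have hdvw : (fGraph n).dist v wv = 1 := by
    refine dist_one ⟨?_, ?_⟩
    · exact (fv_ne_of_mem (show i ∈ wv.1 by rw [hwv]; exact Finset.mem_singleton_self i)
        (show i ∉ v.1 by rw [hv]; exact Finset.notMem_erase i _)).symm
    · rw [hv, hwv]
      apply Finset.eq_univ_iff_forall.2
      intro x
      simp only [Finset.mem_union, Finset.mem_erase, Finset.mem_univ, and_true, ne_eq,
        Finset.mem_singleton]
      tauto
  have hduw : (fGraph n).dist u wv = 3 := by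
    refine dist_three hn ?_ ?_
    · rw [hu, hwv]
      apply Finset.eq_empty_iff_forall_notMem.2
      intro x
      simp [mem_ekSet, Fin.ext_iff]
      omega
    · rw [hu, hwv]
      intro h
      have := Finset.eq_univ_iff_forall.1 h z
      simp [mem_ekSet, Finset.mem_singleton] at this
      rcases this with h' | h'
      · omega
      · omega
  rw [hduv, hdvw, hduw]

/-- Case 4 : `u = ekSet k`, `v = ekSet m`, `k < m < n-2`. -/
lemma resolve_ek_ek {n : ℕ} (hn : 3 ≤ n) (u v : FVertex n) (k m : ℕ)
    (hu : u.1 = ekSet n k) (hv : v.1 = ekSet n m)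
    (hkm : k < m) (hm : m < n - 2) :
    ∃ w : FVertex n, w.1 ∉ I0 n ∧ StronglyResolves (fGraph n) w u v := by
  obtain ⟨wv, hwv⟩ : ∃ w : FVertex n,
      w.1 = Finset.univ.filter (fun x : Fin n => k < (x : ℕ) ∧ (x : ℕ) ≠ m) := by
    refine ⟨⟨_, ?_, ?_⟩, rfl⟩
    · apply Finset.ne_empty_of_mem (a := ⟨n-1, by omega⟩)
      simp; omega
    · intro h
      have := Finset.eq_univ_iff_forall.1 h ⟨0, by omega⟩
      simp at this
  refine ⟨wv, ?_, ?_⟩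
  · rw [hwv]
    refine not_mem_I0 hn (by simp) (y := ⟨m, by omega⟩) (by simp) (by simp; omega)
  left
  have hduv : (fGraph n).dist u v = 2 := by
    refine dist_two hn ?_ ?_ ?_
    · refine (fv_ne_of_mem (x := (⟨m, by omega⟩ : Fin n)) (A := v) (B := u) ?_ ?_).symm
      · rw [hv]; simp [mem_ekSet]
      · rw [hu]; simp [mem_ekSet]; omega
    · rw [hu, hv]
      intro h
      have := Finset.eq_univ_iff_forall.1 h ⟨n-1, by omega⟩
      simp [mem_ekSet] at this
      omega
    · refine ⟨⟨0, by omega⟩, Finset.mem_inter.2 ⟨?_, ?_⟩⟩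
      · rw [hu]; simp [mem_ekSet]
      · rw [hv]; simp [mem_ekSet]
  have hdvw : (fGraph n).dist v wv = 1 := by
    refine dist_one ⟨?_, ?_⟩
    · refine (fv_ne_of_mem (x := (⟨n-1, by omega⟩ : Fin n)) (A := wv) (B := v) ?_ ?_).symm
      · rw [hwv]; simp; omega
      · rw [hv]; simp [mem_ekSet]; omega
    · rw [hv, hwv]
      apply Finset.eq_univ_iff_forall.2
      intro x
      have := x.isLt
      simp only [Finset.mem_union, mem_ekSet, Finset.mem_filter, Finset.mem_univ, true_and]
      omega
  have hduw : (fGraph n).dist u wv = 3 := by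
    refine dist_three hn ?_ ?_
    · rw [hu, hwv]
      apply Finset.eq_empty_iff_forall_notMem.2
      intro x
      simp [mem_ekSet]
      omega
    · rw [hu, hwv]
      intro h
      have := Finset.eq_univ_iff_forall.1 h ⟨m, by omega⟩
      simp [mem_ekSet] at this
      omega
  rw [hduv, hdvw, hduw]

lemma S0_resolving {n : ℕ} (hn : 3 ≤ n) :
    IsStrongResolvingSet (fGraph n) {A : FVertex n | A.1 ∉ I0 n} := by
  intro u v huv
  by_cases hu : u.1 ∉ I0 n
  · exact ⟨u, hu, Or.inr (by rw [SimpleGraph.dist_self]; ring)⟩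
  by_cases hv : v.1 ∉ I0 n
  · exact ⟨v, hv, Or.inl (by rw [SimpleGraph.dist_self]; ring)⟩
  push_neg at hu hv
  rcases mem_I0.1 hu with ⟨i, hui⟩ | ⟨k, hk, huk⟩
  · rcases mem_I0.1 hv with ⟨j, hvj⟩ | ⟨k, hk, hvk⟩
    · have hij : i ≠ j := by
        rintro rfl
        exact huv (Subtype.ext (hui.trans hvj.symm))
      by_cases hj0 : (j : ℕ) ≠ 0
      · exact resolve_cs_cs hn u v i j hui hvj hij hj0
      · push_neg at hj0
        have hi0 : (i : ℕ) ≠ 0 := fun h => hij (by rw [Fin.ext_iff]; omega)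
        obtain ⟨w, hw, hsr⟩ := resolve_cs_cs hn v u j i hvj hui hij.symm hi0
        exact ⟨w, hw, sr_symm hsr⟩
    · -- u = cs i, v = ek k : swap
      rcases Nat.lt_or_ge k (i : ℕ) with h | h
      · obtain ⟨w, hw, hsr⟩ := resolve_ek_cs_gt hn v u k i hvk hui hk h
        exact ⟨w, hw, sr_symm hsr⟩
      · obtain ⟨w, hw, hsr⟩ := resolve_ek_cs_le hn v u k i hvk hui hk h
        exact ⟨w, hw, sr_symm hsr⟩
  · rcases mem_I0.1 hv with ⟨i, hvi⟩ | ⟨m, hm, hvm⟩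
    · rcases Nat.lt_or_ge k (i : ℕ) with h | h
      · exact resolve_ek_cs_gt hn u v k i huk hvi hk h
      · exact resolve_ek_cs_le hn u v k i huk hvi hk h
    · have hkm : k ≠ m := by
        rintro rfl
        exact huv (Subtype.ext (huk.trans hvm.symm))
      rcases Nat.lt_or_ge k m with h | h
      · exact resolve_ek_ek hn u v k m huk hvm h hm
      · obtain ⟨w, hw, hsr⟩ := resolve_ek_ek hn v u m k hvm huk (by omega) hk
        exact ⟨w, hw, sr_symm hsr⟩

open Finset in
lemma card_I0 {n : ℕ} (hn : 3 ≤ n) : (I0 n).card = 2 * n - 2 := by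
  have hcs : (Finset.univ.image (fun x : Fin n => Finset.univ.erase x)).card = n := by
    rw [Finset.card_image_of_injective _ ?_, Finset.card_univ, Fintype.card_fin]
    intro x y h
    have h' : Finset.univ.erase x = Finset.univ.erase y := h
    by_contra hne
    have : x ∈ Finset.univ.erase y := Finset.mem_erase.2 ⟨hne, Finset.mem_univ _⟩
    rw [← h'] at this
    exact (Finset.notMem_erase x _) this
  have hek : ((Finset.range (n - 2)).image (ekSet n)).card = n - 2 := by
    rw [Finset.card_image_of_injOn ?_, Finset.card_range]
    intro k hk l hl h
    rw [Finset.mem_coe, Finset.mem_range] at hk hl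
    by_contra hne
    rcases Nat.lt_or_ge k l with hlt | hge
    · have h1 : (⟨l, by omega⟩ : Fin n) ∈ ekSet n l := mem_ekSet.2 (by simp)
      rw [← h] at h1
      have := mem_ekSet.1 h1
      simp at this; omega
    · have hlt : l < k := by omega
      have h1 : (⟨k, by omega⟩ : Fin n) ∈ ekSet n k := mem_ekSet.2 (by simp)
      rw [h] at h1
      have := mem_ekSet.1 h1
      simp at this; omega
  have hdisj : Disjoint (Finset.univ.image (fun x : Fin n => Finset.univ.erase x))
      ((Finset.range (n - 2)).image (ekSet n)) := by
    rw [Finset.disjoint_left]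
    rintro B hB hB'
    obtain ⟨x, _, rfl⟩ := Finset.mem_image.1 hB
    obtain ⟨k, hk, hBk⟩ := Finset.mem_image.1 hB'
    rw [Finset.mem_range] at hk
    have h1 : (⟨k+1, by omega⟩ : Fin n) ∉ ekSet n k := by simp [mem_ekSet]
    have h2 : (⟨n-1, by omega⟩ : Fin n) ∉ ekSet n k := by simp [mem_ekSet]; omega
    rw [hBk] at h1 h2
    have e1 : (⟨k+1, by omega⟩ : Fin n) = x := by
      by_contra hne
      exact h1 (Finset.mem_erase.2 ⟨hne, Finset.mem_univ _⟩)
    have e2 : (⟨n-1, by omega⟩ : Fin n) = x := by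
      by_contra hne
      exact h2 (Finset.mem_erase.2 ⟨hne, Finset.mem_univ _⟩)
    rw [← e2, Fin.ext_iff] at e1
    simp at e1
    omega
  rw [I0, Finset.card_union_of_disjoint hdisj, hcs, hek]
  omega

open Finset in
lemma card_filter_I0 {n : ℕ} (hn : 3 ≤ n) :
    (Finset.univ.filter (fun A : FVertex n => A.1 ∈ I0 n)).card = 2 * n - 2 := by
  rw [← card_I0 hn]
  apply Finset.card_bij (fun (A : FVertex n) _ => A.1)
  · intro A hA
    exact (Finset.mem_filter.1 hA).2
  · intro A _ B _ h
    exact Subtype.ext h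
  · intro B hB
    have hBv : B ≠ ∅ ∧ B ≠ Finset.univ := by
      rcases mem_I0.1 hB with ⟨x, rfl⟩ | ⟨k, hk, rfl⟩
      · constructor
        · obtain ⟨y, hy⟩ := exists_ne_fin hn x
          exact Finset.ne_empty_of_mem (Finset.mem_erase.2 ⟨hy, Finset.mem_univ _⟩)
        · intro h
          exact (Finset.notMem_erase x _) (h ▸ Finset.mem_univ x)
      · constructor
        · exact Finset.ne_empty_of_mem (mem_ekSet.2 (show ((⟨0, by omega⟩ : Fin n) : ℕ) ≤ k by simp))
        · intro h
          have : (⟨n-1, by omega⟩ : Fin n) ∈ ekSet n k := h ▸ Finset.mem_univ _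
          have := mem_ekSet.1 this
          simp at this
          omega
    exact ⟨⟨B, hBv.1, hBv.2⟩, Finset.mem_filter.2 ⟨Finset.mem_univ _, hB⟩, rfl⟩

open scoped Classical in
lemma mk_set_card {α : Type*} [Fintype α] (S : Set α) :
    Cardinal.mk ↥S = ((Finset.univ.filter (fun a => a ∈ S)).card : Cardinal) := by
  have h1 : S = ↑(Finset.univ.filter (fun a : α => a ∈ S)) := by
    ext a; simp
  conv_lhs => rw [h1]
  exact Cardinal.mk_coe_finset

open scoped Classical in
lemma card_S0 {n : ℕ} (hn : 3 ≤ n) :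
    (Finset.univ.filter (fun A : FVertex n => A.1 ∉ I0 n)).card = 2 ^ n - 2 * n := by
  have hsplit := Finset.card_filter_add_card_filter_not
    (s := (Finset.univ : Finset (FVertex n))) (p := fun A => A.1 ∈ I0 n)
  have h1 := card_filter_I0 hn
  have h2 : (Finset.univ : Finset (FVertex n)).card = 2 ^ n - 2 := by
    rw [Finset.card_univ, card_FVertex hn]
  have hpow := two_mul_add_two_le n hn
  have hconv : (Finset.univ.filter (fun A : FVertex n => A.1 ∉ I0 n)).card
      = (Finset.univ.filter (fun A : FVertex n => ¬ A.1 ∈ I0 n)).card := rfl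
  omega

theorem sdim_fGraph {n : ℕ} (hn : 3 ≤ n) :
    sdim (fGraph n) = ((2 ^ n - 2 * n : ℕ) : Cardinal) := by
  classical
  have hne : Nonempty {S : Set (FVertex n) // IsStrongResolvingSet (fGraph n) S} :=
    ⟨⟨Set.univ, fun u v _ => ⟨v, trivial, Or.inl (by rw [SimpleGraph.dist_self]; ring)⟩⟩⟩
  apply le_antisymm
  · have hle : sdim (fGraph n) ≤ Cardinal.mk ↥{A : FVertex n | A.1 ∉ I0 n} :=
      ciInf_le (OrderBot.bddBelow _) (⟨{A : FVertex n | A.1 ∉ I0 n}, S0_resolving hn⟩ :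
        {S : Set (FVertex n) // IsStrongResolvingSet (fGraph n) S})
    refine hle.trans ?_
    have hmk : Cardinal.mk ↥{A : FVertex n | A.1 ∉ I0 n}
        = ((Finset.univ.filter (fun A : FVertex n => A.1 ∉ I0 n)).card : Cardinal) := by
      have h1 : {A : FVertex n | A.1 ∉ I0 n}
          = ↑(Finset.univ.filter (fun A : FVertex n => A.1 ∉ I0 n)) := by
        ext A; simp
      conv_lhs => rw [h1]
      exact Cardinal.mk_coe_finset
    rw [hmk, card_S0 hn]
  · apply le_ciInf
    rintro ⟨S, hS⟩
    rw [mk_set_card]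
    exact_mod_cast lower_bound_card hn S hS

section IsoInvariance

variable {W : Type*}

lemma dist_iso_le {G : SimpleGraph V} {H : SimpleGraph W} (g : G ≃g H) (u v : V) :
    H.dist (g u) (g v) ≤ G.dist u v := by
  by_cases h : G.Reachable u v
  · obtain ⟨p, hp⟩ := h.exists_walk_length_eq_dist
    have := SimpleGraph.dist_le (p.map g.toHom)
    rwa [SimpleGraph.Walk.length_map, hp] at this
  · rw [SimpleGraph.dist_eq_zero_of_not_reachable h]
    have h2 : ¬ H.Reachable (g u) (g v) := by
      intro hr
      refine h ?_
      have h3 : G.Reachable (g.symm (g u)) (g.symm (g v)) := hr.map (g.symm.toHom)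
      rwa [g.symm_apply_apply, g.symm_apply_apply] at h3
    rw [SimpleGraph.dist_eq_zero_of_not_reachable h2]

lemma dist_iso {G : SimpleGraph V} {H : SimpleGraph W} (f : G ≃g H) (u v : V) :
    H.dist (f u) (f v) = G.dist u v := by
  refine le_antisymm (dist_iso_le f u v) ?_
  have := dist_iso_le f.symm (f u) (f v)
  simpa using this

lemma sr_map {G : SimpleGraph V} {H : SimpleGraph W} (f : G ≃g H) {w u v : V}
    (h : StronglyResolves G w u v) : StronglyResolves H (f w) (f u) (f v) := by
  rcases h with h | h
  · left; rw [dist_iso f, dist_iso f, dist_iso f]; exact h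
  · right; rw [dist_iso f, dist_iso f, dist_iso f]; exact h

lemma srs_image {G : SimpleGraph V} {H : SimpleGraph W} (f : G ≃g H) {S : Set V}
    (hS : IsStrongResolvingSet G S) : IsStrongResolvingSet H (f '' S) := by
  intro x y hxy
  obtain ⟨w, hwS, hw⟩ := hS (f.symm x) (f.symm y)
    (fun h => hxy (by simpa using congrArg f h))
  refine ⟨f w, ⟨w, hwS, rfl⟩, ?_⟩
  have := sr_map f hw
  simpa using this

lemma univ_srs (G : SimpleGraph V) : IsStrongResolvingSet G Set.univ :=
  fun _ v _ => ⟨v, trivial, Or.inl (by rw [SimpleGraph.dist_self]; ring)⟩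

lemma srs_nonempty (G : SimpleGraph V) : Nonempty {S : Set V // IsStrongResolvingSet G S} :=
  ⟨⟨Set.univ, univ_srs G⟩⟩

universe uv uw

lemma sdim_le_iso {V : Type uv} {W : Type uw} {G : SimpleGraph V} {H : SimpleGraph W}
    (f : G ≃g H) : Cardinal.lift.{uv} (sdim H) ≤ Cardinal.lift.{uw} (sdim G) := by
  have := srs_nonempty G
  rw [sdim, sdim, Cardinal.lift_iInf, Cardinal.lift_iInf]
  apply le_ciInf
  rintro ⟨S, hS⟩
  have h1 : (⨅ T : {T : Set W // IsStrongResolvingSet H T}, Cardinal.lift.{uv} (Cardinal.mk ↥(T.1)))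
      ≤ Cardinal.lift.{uv} (Cardinal.mk ↥(f '' S)) :=
    ciInf_le (OrderBot.bddBelow _) (⟨f '' S, srs_image f hS⟩ : {T : Set W // IsStrongResolvingSet H T})
  refine h1.trans ?_
  exact le_of_eq (Cardinal.mk_image_eq_lift _ _ (f.toEquiv.injective))

lemma sdim_iso {V : Type uv} {W : Type uw} {G : SimpleGraph V} {H : SimpleGraph W}
    (f : G ≃g H) : Cardinal.lift.{uw} (sdim G) = Cardinal.lift.{uv} (sdim H) := by
  refine le_antisymm ?_ (sdim_le_iso f)
  have := sdim_le_iso f.symm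
  exact this

end IsoInvariance

section RingSide

variable {m : ℕ} (F : Fin m → Type*) [∀ i, Field (F i)]

def suppIdeal (A : Finset (Fin m)) : Ideal (∀ i, F i) :=
  piIdeal (fun i => if i ∈ A then ⊤ else ⊥)

lemma mem_suppIdeal {A : Finset (Fin m)} {x : ∀ i, F i} :
    x ∈ suppIdeal F A ↔ ∀ i ∉ A, x i = 0 := by
  constructor
  · intro h i hi
    have h2 : x i ∈ (if i ∈ A then (⊤ : Ideal (F i)) else ⊥) := h i
    rw [if_neg hi] at h2
    exact (Ideal.mem_bot).1 h2
  · intro h i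
    by_cases hi : i ∈ A
    · simp [hi]
    · simp only [if_neg hi]
      exact (Ideal.mem_bot).2 (h i hi)

lemma suppIdeal_le_iff {A B : Finset (Fin m)} : suppIdeal F A ≤ suppIdeal F B ↔ A ⊆ B := by
  constructor
  · intro h i hiA
    by_contra hiB
    have hx : Pi.single i (1 : F i) ∈ suppIdeal F A := by
      rw [mem_suppIdeal]
      intro j hj
      exact Pi.single_eq_of_ne (fun hji => hj (by rw [hji]; exact hiA)) 1
    have := (mem_suppIdeal F).1 (h hx) i hiB
    rw [Pi.single_eq_same] at this
    exact one_ne_zero this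
  · intro h x hx
    rw [mem_suppIdeal] at hx ⊢
    exact fun i hi => hx i (fun hiA => hi (h hiA))

lemma suppIdeal_injective : Function.Injective (suppIdeal F) := by
  intro A B h
  exact Finset.Subset.antisymm ((suppIdeal_le_iff F).1 h.le) ((suppIdeal_le_iff F).1 h.ge)

lemma suppIdeal_univ : suppIdeal F Finset.univ = ⊤ := by
  rw [eq_top_iff]
  intro x _
  rw [mem_suppIdeal]
  exact fun i hi => absurd (Finset.mem_univ i) hi

lemma suppIdeal_empty : suppIdeal F ∅ = ⊥ := by
  refine le_antisymm ?_ bot_le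
  intro x hx
  rw [mem_suppIdeal] at hx
  rw [Ideal.mem_bot]
  funext i
  exact hx i (Finset.notMem_empty i)

lemma suppIdeal_sup {A B : Finset (Fin m)} :
    suppIdeal F A ⊔ suppIdeal F B = suppIdeal F (A ∪ B) := by
  classical
  refine le_antisymm (sup_le ((suppIdeal_le_iff F).2 Finset.subset_union_left)
    ((suppIdeal_le_iff F).2 Finset.subset_union_right)) ?_
  intro y hy
  rw [mem_suppIdeal] at hy
  have hdecomp : y = (fun i => if i ∈ A then y i else 0) + (fun i => if i ∈ A then 0 else y i) := by
    funext i
    by_cases hi : i ∈ A <;> simp [hi]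
  rw [hdecomp]
  refine Submodule.add_mem _ (Submodule.mem_sup_left ?_) (Submodule.mem_sup_right ?_)
  · rw [mem_suppIdeal]
    intro i hi
    simp [hi]
  · rw [mem_suppIdeal]
    intro i hi
    by_cases hiA : i ∈ A
    · simp [hiA]
    · simp only [if_neg hiA]
      exact hy i (fun hmem => (Finset.mem_union.1 hmem).elim hiA hi)

lemma suppIdeal_surjective (I : Ideal (∀ i, F i)) : ∃ A, I = suppIdeal F A := by
  classical
  refine ⟨Finset.univ.filter (fun i => ∃ x ∈ I, x i ≠ 0), le_antisymm ?_ ?_⟩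
  · intro x hx
    rw [mem_suppIdeal]
    intro i hi
    simp only [Finset.mem_filter, Finset.mem_univ, true_and, not_exists] at hi
    by_contra hxi
    exact absurd hx (by simpa [hxi] using hi x)
  · intro y hy
    rw [mem_suppIdeal] at hy
    have hrep : y = ∑ i : Fin m, Pi.single i (y i) := (Finset.univ_sum_single y).symm
    rw [hrep]
    refine Submodule.sum_mem _ ?_
    intro i _
    by_cases hiA : i ∈ Finset.univ.filter (fun i => ∃ x ∈ I, x i ≠ 0)
    · simp only [Finset.mem_filter, Finset.mem_univ, true_and] at hiA
      obtain ⟨x, hxI, hxi⟩ := hiA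
      have heq : Pi.single i (y i) = (Pi.single i (y i * (x i)⁻¹)) * x := by
        funext j
        rcases eq_or_ne j i with rfl | hj
        · rw [Pi.mul_apply, Pi.single_eq_same, Pi.single_eq_same, mul_assoc,
            inv_mul_cancel₀ hxi, mul_one]
        · rw [Pi.mul_apply, Pi.single_eq_of_ne hj, Pi.single_eq_of_ne hj, zero_mul]
      rw [heq]
      exact Ideal.mul_mem_left _ _ hxI
    · rw [hy i hiA, Pi.single_zero]
      exact Submodule.zero_mem _

lemma suppIdeal_erase_isMaximal (i : Fin m) :
    (suppIdeal F (Finset.univ.erase i)).IsMaximal := by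
  rw [Ideal.isMaximal_def]
  constructor
  · intro h
    rw [← suppIdeal_univ F] at h
    have h2 := suppIdeal_injective F h
    exact (Finset.notMem_erase i Finset.univ) (by rw [h2]; exact Finset.mem_univ i)
  · intro J hJ
    obtain ⟨B, rfl⟩ := suppIdeal_surjective F J
    have hle : Finset.univ.erase i ⊆ B := (suppIdeal_le_iff F).1 hJ.le
    have hne : Finset.univ.erase i ≠ B := fun h => hJ.ne (by rw [h])
    have hiB : i ∈ B := by
      by_contra hiB
      refine hne (Finset.Subset.antisymm hle ?_)
      intro x hx
      exact Finset.mem_erase.2 ⟨fun h => hiB (h ▸ hx), Finset.mem_univ _⟩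
    have hBuniv : B = Finset.univ := by
      apply Finset.eq_univ_iff_forall.2
      intro x
      rcases eq_or_ne x i with rfl | hx
      · exact hiB
      · exact hle (Finset.mem_erase.2 ⟨hx, Finset.mem_univ _⟩)
    rw [hBuniv, suppIdeal_univ]

lemma jacobson_bot_pi_fields (hm : 0 < m) : Ideal.jacobson (⊥ : Ideal (∀ i, F i)) = ⊥ := by
  refine le_antisymm ?_ bot_le
  intro x hx
  rw [Ideal.mem_bot]
  funext i
  have hle : Ideal.jacobson (⊥ : Ideal (∀ i, F i)) ≤ suppIdeal F (Finset.univ.erase i) :=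
    sInf_le ⟨bot_le, suppIdeal_erase_isMaximal F i⟩
  have := (mem_suppIdeal F).1 (hle hx) i (Finset.notMem_erase i _)
  simpa using this

lemma isComaxVertex_suppIdeal (hm : 3 ≤ m) (A : FVertex m) :
    IsComaxVertex (∀ i, F i) (suppIdeal F A.1) := by
  constructor
  · intro h
    rw [← suppIdeal_univ F] at h
    exact A.2.2 (suppIdeal_injective F h)
  · rw [jacobson_bot_pi_fields F (by omega)]
    intro h
    rw [le_bot_iff, ← suppIdeal_empty F] at h
    exact A.2.1 (suppIdeal_injective F h)

/-- The vertex equivalence. -/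
noncomputable def vertexEquiv (hm : 3 ≤ m) :
    FVertex m ≃ {I : Ideal (∀ i, F i) // IsComaxVertex (∀ i, F i) I} := by
  apply Equiv.ofBijective (fun A => (⟨suppIdeal F A.1, isComaxVertex_suppIdeal F hm A⟩ :
    {I : Ideal (∀ i, F i) // IsComaxVertex (∀ i, F i) I}))
  constructor
  · intro A B h
    exact Subtype.ext (suppIdeal_injective F (congrArg Subtype.val h))
  · rintro ⟨I, hI1, hI2⟩
    obtain ⟨A, rfl⟩ := suppIdeal_surjective F I
    have h1 : A ≠ ∅ := by
      rintro rfl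
      rw [suppIdeal_empty] at hI2
      exact hI2 bot_le
    have h2 : A ≠ Finset.univ := by
      rintro rfl
      rw [suppIdeal_univ] at hI1
      exact hI1 rfl
    exact ⟨⟨A, h1, h2⟩, rfl⟩

lemma vertexEquiv_apply (hm : 3 ≤ m) (A : FVertex m) :
    (vertexEquiv F hm A).1 = suppIdeal F A.1 := rfl

/-- The graph isomorphism. -/
noncomputable def graphIso (hm : 3 ≤ m) : fGraph m ≃g comaxGraph (∀ i, F i) := by
  refine ⟨vertexEquiv F hm, ?_⟩
  intro A B
  show (vertexEquiv F hm A ≠ vertexEquiv F hm B ∧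
      (vertexEquiv F hm A).1 ⊔ (vertexEquiv F hm B).1 = ⊤) ↔ _
  rw [vertexEquiv_apply, vertexEquiv_apply]
  constructor
  · rintro ⟨hne, hsup⟩
    refine ⟨fun h => hne (congrArg _ h), ?_⟩
    rw [suppIdeal_sup, ← suppIdeal_univ F] at hsup
    exact suppIdeal_injective F hsup
  · rintro ⟨hne, hsup⟩
    refine ⟨fun h => hne ((vertexEquiv F hm).injective h), ?_⟩
    rw [suppIdeal_sup, hsup, suppIdeal_univ]

end RingSide


/-- For `R ≅ F_1 × ⋯ × F_n` a product of fields, `n ≥ 3`: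
`sdim_M(Γ(R)) = 2^n - 2n`. -/
theorem stmt_14 (n : ℕ) (hn : 3 ≤ n) (F : Fin n → Type*) [∀ i, Field (F i)] :
    sdim (comaxGraph (∀ i, F i)) = ((2 ^ n - 2 * n : ℕ) : Cardinal) := by
  have hiso := sdim_iso (graphIso F hn)
  rw [sdim_fGraph hn, Cardinal.lift_natCast, Cardinal.lift_uzero] at hiso
  exact hiso.symm

end CoMax
end

section
/- Let R ≅ R_1 × ··· × R_n with n ≥ 2, where each R_i is an Artinian local ring that is not a field (i.e., Nil(R_i) ≠ 0). Then two vertices I, J of Γ(R) are adjacent in the strong resolving graph Γ(R)_SR if and only if [I] = [J], or I′ + J′ ≠ R, I′ ⊄ J′ and J′ ⊄ I′; in other words, Γ(R)_SR equals the graph Γ(R)′. -/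
/-! Common definitions: metric/strong-metric dimension, strong resolving graph,
independence number, and the co-maximal ideal graph of a commutative ring. -/

namespace CoMax

variable {V : Type*}

/-! ### Auxiliary machinery for the proof -/

section Aux

variable {n : ℕ} {R : Fin n → Type*} [∀ i, CommRing (R i)]

lemma mem_piIdeal {g : ∀ i, Ideal (R i)} {x : ∀ i, R i} :
    x ∈ piIdeal g ↔ ∀ i, x i ∈ g i := Iff.rfl

lemma mem_comp {K : Ideal (∀ i, R i)} {i : Fin n} {x : R i} :
    x ∈ comp K i ↔ ∃ y ∈ K, y i = x := by
  constructor
  · intro h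
    obtain ⟨y, hy, hyx⟩ :=
      (Ideal.mem_map_iff_of_surjective _ (Function.surjective_eval i)).mp h
    exact ⟨y, hy, hyx⟩
  · rintro ⟨y, hy, rfl⟩; exact Ideal.mem_map_of_mem _ hy

lemma comp_piIdeal (g : ∀ i, Ideal (R i)) (i : Fin n) :
    comp (piIdeal g) i = g i := by
  ext x
  rw [mem_comp]
  constructor
  · rintro ⟨y, hy, rfl⟩; exact hy i
  · intro hx
    refine ⟨Pi.single i x, fun j => ?_, Pi.single_eq_same i x⟩
    rcases eq_or_ne j i with rfl | hj
    · rwa [Pi.single_eq_same]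
    · rw [Pi.single_eq_of_ne hj]; exact zero_mem _

lemma single_mem {K : Ideal (∀ i, R i)} {i : Fin n} {x : R i}
    (hx : x ∈ comp K i) : Pi.single i x ∈ K := by
  obtain ⟨y, hy, rfl⟩ := mem_comp.mp hx
  have hs : Pi.single i (y i) = Pi.single i (1 : R i) * y := by
    funext j
    rcases eq_or_ne j i with rfl | hj
    · simp
    · simp [Pi.single_eq_of_ne hj]
  rw [hs]
  exact K.mul_mem_left _ hy

lemma piIdeal_comp (K : Ideal (∀ i, R i)) : piIdeal (comp K) = K := by
  ext x
  rw [mem_piIdeal]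
  constructor
  · intro h
    have hx : x = ∑ i, Pi.single i (x i) := (Finset.univ_sum_single x).symm
    rw [hx]
    exact Ideal.sum_mem _ fun i _ => single_mem (h i)
  · intro h i; exact Ideal.mem_map_of_mem _ h

lemma le_iff_comp {K L : Ideal (∀ i, R i)} :
    K ≤ L ↔ ∀ i, comp K i ≤ comp L i := by
  constructor
  · intro h i; exact Ideal.map_mono h
  · intro h x hx
    rw [← piIdeal_comp L, mem_piIdeal]
    exact fun i => h i (Ideal.mem_map_of_mem _ hx)

lemma eq_iff_comp {K L : Ideal (∀ i, R i)} :
    K = L ↔ ∀ i, comp K i = comp L i := by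
  constructor
  · rintro rfl i; rfl
  · intro h
    exact le_antisymm (le_iff_comp.mpr fun i => (h i).le)
      (le_iff_comp.mpr fun i => (h i).ge)

lemma comp_sup (K L : Ideal (∀ i, R i)) (i : Fin n) :
    comp (K ⊔ L) i = comp K i ⊔ comp L i := Ideal.map_sup _ _ _

lemma comp_top (i : Fin n) : comp (⊤ : Ideal (∀ i, R i)) i = ⊤ :=
  Ideal.map_top _

lemma eq_top_iff_comp {K : Ideal (∀ i, R i)} :
    K = ⊤ ↔ ∀ i, comp K i = ⊤ := by
  rw [eq_iff_comp]
  simp [comp_top]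

lemma isUnit_pi {f : ∀ i, R i} (h : ∀ i, IsUnit (f i)) : IsUnit f := by
  refine isUnit_iff_exists_inv.mpr ⟨fun i => ↑(h i).unit⁻¹, ?_⟩
  funext i
  exact (h i).mul_val_inv

end Aux

section Local

variable {S : Type*} [CommRing S] [IsArtinianRing S] [IsLocalRing S]

lemma nilradical_eq_max : nilradical S = IsLocalRing.maximalIdeal S := by
  apply le_antisymm
  · rw [← IsLocalRing.jacobson_eq_maximalIdeal (⊥ : Ideal S) bot_ne_top]
    exact Ideal.radical_le_jacobson
  · rw [← IsLocalRing.jacobson_eq_maximalIdeal (⊥ : Ideal S) bot_ne_top]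
    obtain ⟨k, hk⟩ := IsArtinianRing.isNilpotent_jacobson_bot (R := S)
    intro x hx
    refine mem_nilradical.mpr ⟨k, ?_⟩
    have hm := Ideal.pow_mem_pow hx k
    rw [hk] at hm
    simpa using hm

lemma le_nil_iff {I : Ideal S} : I ≤ nilradical S ↔ I ≠ ⊤ := by
  constructor
  · intro h hI
    rw [hI, top_le_iff, nilradical_eq_max] at h
    exact (IsLocalRing.maximalIdeal.isMaximal S).ne_top h
  · intro h
    rw [nilradical_eq_max]
    exact IsLocalRing.le_maximalIdeal h

omit [IsArtinianRing S] in
lemma sup_eq_top_iff_loc {I J : Ideal S} : I ⊔ J = ⊤ ↔ I = ⊤ ∨ J = ⊤ := by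
  constructor
  · intro h
    by_contra hc
    push_neg at hc
    have h1 := IsLocalRing.le_maximalIdeal hc.1
    have h2 := IsLocalRing.le_maximalIdeal hc.2
    exact (IsLocalRing.maximalIdeal.isMaximal S).ne_top
      (top_le_iff.mp (h ▸ sup_le h1 h2))
  · rintro (rfl | rfl) <;> simp

lemma mem_jac_iff {x : S} :
    x ∈ Ideal.jacobson (⊥ : Ideal S) ↔ x ∈ nilradical S := by
  rw [nilradical_eq_max, ← IsLocalRing.jacobson_eq_maximalIdeal (⊥ : Ideal S) bot_ne_top]

end Local
section Graph

variable {n : ℕ} {R : Fin n → Type*} [∀ i, CommRing (R i)]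
  [∀ i, IsArtinianRing (R i)] [∀ i, IsLocalRing (R i)]

/-- The set of indices where the component of `K` is proper. -/
def Bs (K : Ideal (∀ i, R i)) : Set (Fin n) := {i | comp K i ≠ ⊤}

lemma mem_Bs {K : Ideal (∀ i, R i)} {i : Fin n} : i ∈ Bs K ↔ comp K i ≠ ⊤ := Iff.rfl

lemma le_jacobson_iff {K : Ideal (∀ i, R i)} :
    K ≤ Ideal.jacobson (⊥ : Ideal (∀ i, R i)) ↔ ∀ i, comp K i ≠ ⊤ := by
  constructor
  · intro h i
    rw [← le_nil_iff (I := comp K i)]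
    intro x hx
    obtain ⟨y, hy, rfl⟩ := mem_comp.mp hx
    rw [← mem_jac_iff, Ideal.mem_jacobson_bot]
    intro z
    have hu := Ideal.mem_jacobson_bot.mp (h hy) (Pi.single i z)
    have hm := hu.map (Pi.evalRingHom R i)
    simpa using hm
  · intro h x hx
    rw [Ideal.mem_jacobson_bot]
    intro y
    apply isUnit_pi
    intro i
    have hxi : x i ∈ comp K i := Ideal.mem_map_of_mem _ hx
    have hj : x i ∈ Ideal.jacobson (⊥ : Ideal (R i)) := by
      rw [mem_jac_iff]; exact le_nil_iff.mpr (h i) hxi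
    have hu := Ideal.mem_jacobson_bot.mp hj (y i)
    simpa using hu

lemma Bs_nonempty (u : {K : Ideal (∀ i, R i) // IsComaxVertex (∀ i, R i) K}) :
    (Bs u.1).Nonempty := by
  by_contra h
  rw [Set.not_nonempty_iff_eq_empty] at h
  apply u.2.1
  rw [eq_top_iff_comp]
  intro i
  by_contra hi
  exact Set.eq_empty_iff_forall_notMem.mp h i hi

lemma Bs_ne_univ (u : {K : Ideal (∀ i, R i) // IsComaxVertex (∀ i, R i) K}) :
    Bs u.1 ≠ Set.univ := by
  intro h
  apply u.2.2
  rw [le_jacobson_iff]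
  intro i
  exact (h ▸ Set.mem_univ i : i ∈ Bs u.1)

lemma sup_eq_top_iff_Bs {K L : Ideal (∀ i, R i)} :
    K ⊔ L = ⊤ ↔ Bs K ∩ Bs L = ∅ := by
  rw [eq_top_iff_comp]
  constructor
  · intro h
    rw [Set.eq_empty_iff_forall_notMem]
    rintro i ⟨h1, h2⟩
    have hs : comp K i ⊔ comp L i = ⊤ := by rw [← comp_sup]; exact h i
    rcases sup_eq_top_iff_loc.mp hs with h' | h'
    · exact h1 h'
    · exact h2 h'
  · intro h i
    rw [comp_sup]
    rcases not_and_or.mp (Set.eq_empty_iff_forall_notMem.mp h i) with h' | h'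
    · exact sup_eq_top_iff_loc.mpr (Or.inl (not_not.mp h'))
    · exact sup_eq_top_iff_loc.mpr (Or.inr (not_not.mp h'))

lemma adj_iff {u v : {K : Ideal (∀ i, R i) // IsComaxVertex (∀ i, R i) K}} :
    (comaxGraph (∀ i, R i)).Adj u v ↔ u ≠ v ∧ Bs u.1 ∩ Bs v.1 = ∅ :=
  ⟨fun ⟨h1, h2⟩ => ⟨h1, sup_eq_top_iff_Bs.mp h2⟩,
   fun ⟨h1, h2⟩ => ⟨h1, sup_eq_top_iff_Bs.mpr h2⟩⟩

lemma ne_of_Bs_disjoint {u v : {K : Ideal (∀ i, R i) // IsComaxVertex (∀ i, R i) K}}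
    (h : Bs u.1 ∩ Bs v.1 = ∅) : u ≠ v := by
  rintro rfl
  obtain ⟨i, hi⟩ := Bs_nonempty u
  rw [Set.inter_self, Set.eq_empty_iff_forall_notMem] at h
  exact h i hi

lemma adj_of_Bs_disjoint {u v : {K : Ideal (∀ i, R i) // IsComaxVertex (∀ i, R i) K}}
    (h : Bs u.1 ∩ Bs v.1 = ∅) : (comaxGraph (∀ i, R i)).Adj u v :=
  adj_iff.mpr ⟨ne_of_Bs_disjoint h, h⟩

open Classical in
/-- An ideal of the product with prescribed set of proper components. -/
noncomputable def mkI (R : Fin n → Type*) [∀ i, CommRing (R i)]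
    (S : Set (Fin n)) (b : Bool) : Ideal (∀ i, R i) :=
  piIdeal fun i => if i ∈ S then (if b then ⊥ else nilradical (R i)) else ⊤

open Classical in
lemma comp_mkI (S : Set (Fin n)) (b : Bool) (i : Fin n) :
    comp (mkI R S b) i = if i ∈ S then (if b then ⊥ else nilradical (R i)) else ⊤ :=
  comp_piIdeal _ _

lemma Bs_mkI (S : Set (Fin n)) (b : Bool) : Bs (mkI R S b) = S := by
  ext i
  rw [mem_Bs, comp_mkI]
  by_cases h : i ∈ S
  · rw [if_pos h]
    simp only [h, iff_true]
    cases b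
    · simpa using le_nil_iff.mp (le_refl (nilradical (R i)))
    · simpa using (bot_ne_top : (⊥ : Ideal (R i)) ≠ ⊤)
  · rw [if_neg h]
    simp [h]

lemma mkI_isVertex (S : Set (Fin n)) (hS : S.Nonempty) (hS' : S ≠ Set.univ) (b : Bool) :
    IsComaxVertex (∀ i, R i) (mkI R S b) := by
  constructor
  · intro h
    rw [eq_top_iff_comp] at h
    obtain ⟨i, hi⟩ := hS
    have hc := h i
    rw [comp_mkI, if_pos hi] at hc
    cases b
    · exact le_nil_iff.mp (le_refl (nilradical (R i))) (by simpa using hc)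
    · exact (bot_ne_top : (⊥ : Ideal (R i)) ≠ ⊤) (by simpa using hc)
  · intro h
    rw [le_jacobson_iff] at h
    obtain ⟨i, hi⟩ : ∃ i, i ∉ S := by
      by_contra hc
      push_neg at hc
      exact hS' (Set.eq_univ_iff_forall.mpr hc)
    exact h i (by rw [comp_mkI, if_neg hi])

lemma exists_vertex (hnil : ∀ i, nilradical (R i) ≠ ⊥) (S : Set (Fin n))
    (hS : S.Nonempty) (hS' : S ≠ Set.univ)
    (u : {K : Ideal (∀ i, R i) // IsComaxVertex (∀ i, R i) K}) :
    ∃ v : {K : Ideal (∀ i, R i) // IsComaxVertex (∀ i, R i) K},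
      v ≠ u ∧ Bs v.1 = S := by
  have hne : mkI R S true ≠ mkI R S false := by
    obtain ⟨i, hi⟩ := hS
    intro h
    rw [eq_iff_comp] at h
    have hc := h i
    rw [comp_mkI, comp_mkI, if_pos hi, if_pos hi] at hc
    simp only [if_pos, if_neg] at hc
    exact hnil i (by simpa using hc.symm)
  by_cases h : u.1 = mkI R S true
  · refine ⟨⟨mkI R S false, mkI_isVertex S hS hS' false⟩, ?_, Bs_mkI S false⟩
    intro hc
    have hv := congrArg Subtype.val hc
    simp only at hv
    rw [h] at hv
    exact hne hv.symm
  · refine ⟨⟨mkI R S true, mkI_isVertex S hS hS' true⟩, ?_, Bs_mkI S true⟩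
    intro hc
    have hv := congrArg Subtype.val hc
    simp only at hv
    exact h hv.symm

end Graph
section Dist

open SimpleGraph

lemma exists_mid {V' : Type*} {G : SimpleGraph V'} {u v : V'} (h : G.dist u v = 2) :
    ∃ w, G.Adj u w ∧ G.Adj w v := by
  have hne : G.dist u v ≠ 0 := by omega
  obtain ⟨p, hp⟩ := SimpleGraph.exists_walk_of_dist_ne_zero hne
  rw [h] at hp
  cases p with
  | nil => simp at hp
  | cons a q =>
    cases q with
    | nil => simp at hp
    | cons b r =>
      have hr : r.length = 0 := by
        simp only [Walk.length_cons] at hp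
        omega
      have he := SimpleGraph.Walk.eq_of_length_eq_zero hr
      exact ⟨_, a, he ▸ b⟩

variable {n : ℕ} {R : Fin n → Type*} [∀ i, CommRing (R i)]
  [∀ i, IsArtinianRing (R i)] [∀ i, IsLocalRing (R i)]

open Classical in
/-- The value of the distance in the comaximal graph, as a function of the
sets of proper components. -/
noncomputable def dv (B C : Set (Fin n)) : ℕ :=
  if B ∩ C = ∅ then 1 else if B ∪ C = Set.univ then 3 else 2

open Classical in
lemma dv_def (B C : Set (Fin n)) :
    dv B C = if B ∩ C = ∅ then 1 else if B ∪ C = Set.univ then 3 else 2 := rfl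

lemma dv_le_three (B C : Set (Fin n)) : dv B C ≤ 3 := by
  unfold dv; split_ifs <;> omega

lemma dv_pos (B C : Set (Fin n)) : 1 ≤ dv B C := by
  unfold dv; split_ifs <;> omega

lemma dist_eq (hnil : ∀ i, nilradical (R i) ≠ ⊥)
    (u v : {K : Ideal (∀ i, R i) // IsComaxVertex (∀ i, R i) K}) (h : u ≠ v) :
    (comaxGraph (∀ i, R i)).dist u v = dv (Bs u.1) (Bs v.1) := by
  set G := comaxGraph (∀ i, R i) with hG
  by_cases h1 : Bs u.1 ∩ Bs v.1 = ∅
  · rw [dv_def, if_pos h1]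
    exact SimpleGraph.dist_eq_one_iff_adj.mpr (adj_iff.mpr ⟨h, h1⟩)
  · have hnadj : ¬ G.Adj u v := fun ha => h1 (adj_iff.mp ha).2
    by_cases h2 : Bs u.1 ∪ Bs v.1 = Set.univ
    · rw [dv_def, if_neg h1, if_pos h2]
      obtain ⟨w1, hw1u, hw1B⟩ := exists_vertex hnil (Bs u.1)ᶜ
        (Set.nonempty_compl.mpr (Bs_ne_univ u))
        (fun hh => (Bs_nonempty u).ne_empty (Set.compl_univ_iff.mp hh)) u
      obtain ⟨w2, hw2u, hw2B⟩ := exists_vertex hnil (Bs v.1)ᶜ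
        (Set.nonempty_compl.mpr (Bs_ne_univ v))
        (fun hh => (Bs_nonempty v).ne_empty (Set.compl_univ_iff.mp hh)) u
      have a1 : G.Adj u w1 := adj_of_Bs_disjoint (by rw [hw1B, Set.inter_compl_self])
      have a2 : G.Adj w1 w2 := adj_of_Bs_disjoint (by
        rw [hw1B, hw2B, ← Set.compl_union, h2, Set.compl_univ])
      have a3 : G.Adj w2 v := adj_of_Bs_disjoint (by rw [hw2B, Set.compl_inter_self])
      have hle : G.dist u v ≤ 3 := by
        simpa using SimpleGraph.dist_le (Walk.cons a1 (Walk.cons a2 (Walk.cons a3 Walk.nil)))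
      have hne0 : G.dist u v ≠ 0 :=
        SimpleGraph.dist_ne_zero_iff_ne_and_reachable.mpr
          ⟨h, (Walk.cons a1 (Walk.cons a2 (Walk.cons a3 Walk.nil))).reachable⟩
      have hne1 : G.dist u v ≠ 1 := fun hd =>
        hnadj (SimpleGraph.dist_eq_one_iff_adj.mp hd)
      have hne2 : G.dist u v ≠ 2 := by
        intro hd
        obtain ⟨w, hwu, hwv⟩ := exists_mid hd
        have d1 := (adj_iff.mp hwu).2
        have d2 := (adj_iff.mp hwv.symm).2
        obtain ⟨i, hi⟩ := Bs_nonempty w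
        have : i ∈ Bs u.1 ∪ Bs v.1 := h2 ▸ Set.mem_univ i
        rcases this with hh | hh
        · exact Set.eq_empty_iff_forall_notMem.mp d1 i ⟨hh, hi⟩
        · exact Set.eq_empty_iff_forall_notMem.mp d2 i ⟨hh, hi⟩
      omega
    · rw [dv_def, if_neg h1, if_neg h2]
      obtain ⟨i, hi⟩ : ∃ i, i ∉ Bs u.1 ∪ Bs v.1 := by
        by_contra hc
        push_neg at hc
        exact h2 (Set.eq_univ_iff_forall.mpr hc)
      have hsing : ({i} : Set (Fin n)) ≠ Set.univ := by
        obtain ⟨j, hj⟩ := Bs_nonempty u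
        intro hh
        have hji : j ∈ ({i} : Set (Fin n)) := hh ▸ Set.mem_univ j
        rw [Set.mem_singleton_iff] at hji
        exact hi (Or.inl (hji ▸ hj))
      obtain ⟨w, hwu, hwB⟩ := exists_vertex hnil {i} ⟨i, rfl⟩ hsing u
      have a1 : G.Adj u w := adj_of_Bs_disjoint (by
        rw [hwB, Set.eq_empty_iff_forall_notMem]
        rintro j ⟨hj1, hj2⟩
        rw [Set.mem_singleton_iff] at hj2
        exact hi (Or.inl (hj2 ▸ hj1)))
      have a2 : G.Adj w v := adj_of_Bs_disjoint (by
        rw [hwB, Set.eq_empty_iff_forall_notMem]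
        rintro j ⟨hj1, hj2⟩
        rw [Set.mem_singleton_iff] at hj1
        exact hi (Or.inr (hj1 ▸ hj2)))
      have hle : G.dist u v ≤ 2 := by
        simpa using SimpleGraph.dist_le (Walk.cons a1 (Walk.cons a2 Walk.nil))
      have hne0 : G.dist u v ≠ 0 :=
        SimpleGraph.dist_ne_zero_iff_ne_and_reachable.mpr
          ⟨h, (Walk.cons a1 (Walk.cons a2 Walk.nil)).reachable⟩
      have hne1 : G.dist u v ≠ 1 := fun hd =>
        hnadj (SimpleGraph.dist_eq_one_iff_adj.mp hd)
      omega

end Dist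
section MMD

variable {n : ℕ} {R : Fin n → Type*} [∀ i, CommRing (R i)]
  [∀ i, IsArtinianRing (R i)] [∀ i, IsLocalRing (R i)]

lemma maxdist_of (hnil : ∀ i, nilradical (R i) ≠ ⊥)
    {u v : {K : Ideal (∀ i, R i) // IsComaxVertex (∀ i, R i) K}} (h : u ≠ v)
    (hQ : Bs u.1 = Bs v.1 ∨ (Bs u.1 ∩ Bs v.1 ≠ ∅ ∧ ¬ Bs u.1 ⊆ Bs v.1)) :
    MaximallyDistantFrom (comaxGraph (∀ i, R i)) u v := by
  intro w haw
  by_cases hw : w = v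
  · subst hw
    rw [SimpleGraph.dist_self]
    exact Nat.zero_le _
  have hdisj := (adj_iff.mp haw).2
  rw [dist_eq hnil u v h, dist_eq hnil v w (Ne.symm hw)]
  rcases hQ with hBC | ⟨hint, hsub⟩
  · have h2 : dv (Bs u.1) (Bs v.1) = 2 := by
      rw [dv_def, if_neg (by rw [← hBC, Set.inter_self]; exact (Bs_nonempty u).ne_empty),
        if_neg (by rw [← hBC, Set.union_self]; exact Bs_ne_univ u)]
    have h1 : dv (Bs v.1) (Bs w.1) = 1 := by
      rw [dv_def, if_pos (by rw [← hBC]; exact hdisj)]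
    omega
  · by_cases hu : Bs u.1 ∪ Bs v.1 = Set.univ
    · rw [show dv (Bs u.1) (Bs v.1) = 3 by rw [dv_def, if_neg hint, if_pos hu]]
      exact dv_le_three _ _
    · rw [show dv (Bs u.1) (Bs v.1) = 2 by rw [dv_def, if_neg hint, if_neg hu]]
      rw [dv_def]
      split_ifs with hh1 hh2
      · omega
      · exfalso
        apply hsub
        intro j hj
        have hju : j ∈ Bs v.1 ∪ Bs w.1 := hh2 ▸ Set.mem_univ j
        rcases hju with hj' | hj'
        · exact hj'
        · exact (Set.eq_empty_iff_forall_notMem.mp hdisj j ⟨hj, hj'⟩).elim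
      · omega

lemma not_maxdist (hnil : ∀ i, nilradical (R i) ≠ ⊥)
    {u v : {K : Ideal (∀ i, R i) // IsComaxVertex (∀ i, R i) K}} (h : u ≠ v)
    (hc : Bs u.1 ∩ Bs v.1 = ∅ ∨ (Bs u.1 ⊆ Bs v.1 ∧ Bs u.1 ≠ Bs v.1)) :
    ¬ MaximallyDistantFrom (comaxGraph (∀ i, R i)) u v := by
  intro hmd
  rcases hc with hdisj | ⟨hsub, hne⟩
  · obtain ⟨K, hKv, hKB⟩ := exists_vertex hnil (Bs v.1) (Bs_nonempty v) (Bs_ne_univ v) v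
    have haw : (comaxGraph (∀ i, R i)).Adj u K :=
      adj_of_Bs_disjoint (by rw [hKB]; exact hdisj)
    have hle := hmd K haw
    rw [dist_eq hnil u v h, dist_eq hnil v K (Ne.symm hKv)] at hle
    have e1 : dv (Bs u.1) (Bs v.1) = 1 := by rw [dv_def, if_pos hdisj]
    have e2 : 2 ≤ dv (Bs v.1) (Bs K.1) := by
      rw [hKB, dv_def, if_neg (by rw [Set.inter_self]; exact (Bs_nonempty v).ne_empty)]
      split_ifs <;> omega
    omega
  · have hBne := Bs_nonempty u
    have hCneU := Bs_ne_univ v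
    obtain ⟨j0, hj0C, hj0B⟩ : ∃ j, j ∈ Bs v.1 ∧ j ∉ Bs u.1 := by
      by_contra hcc
      push_neg at hcc
      exact hne (le_antisymm hsub hcc)
    obtain ⟨K, hKv, hKB⟩ := exists_vertex hnil ((Bs v.1)ᶜ ∪ (Bs v.1 \ Bs u.1))
      ⟨j0, Or.inr ⟨hj0C, hj0B⟩⟩
      (by
        obtain ⟨j, hj⟩ := hBne
        intro hh
        have hjS : j ∈ (Bs v.1)ᶜ ∪ (Bs v.1 \ Bs u.1) := hh ▸ Set.mem_univ j
        rcases hjS with h' | h'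
        · exact h' (hsub hj)
        · exact h'.2 hj) v
    have haw : (comaxGraph (∀ i, R i)).Adj u K := adj_of_Bs_disjoint (by
      rw [hKB, Set.eq_empty_iff_forall_notMem]
      rintro j ⟨hjB, hjS⟩
      rcases hjS with h' | h'
      · exact h' (hsub hjB)
      · exact h'.2 hjB)
    have hle := hmd K haw
    rw [dist_eq hnil u v h, dist_eq hnil v K (Ne.symm hKv)] at hle
    have e1 : dv (Bs u.1) (Bs v.1) = 2 := by
      rw [dv_def, if_neg (by rw [Set.inter_eq_left.mpr hsub]; exact hBne.ne_empty),
        if_neg (by rw [Set.union_eq_right.mpr hsub]; exact hCneU)]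
    have e2 : dv (Bs v.1) (Bs K.1) = 3 := by
      rw [hKB, dv_def, if_neg, if_pos]
      · apply Set.eq_univ_iff_forall.mpr
        intro j
        by_cases hj : j ∈ Bs v.1
        · exact Or.inl hj
        · exact Or.inr (Or.inl hj)
      · intro hh
        exact Set.eq_empty_iff_forall_notMem.mp hh j0 ⟨hj0C, Or.inr ⟨hj0C, hj0B⟩⟩
    omega

lemma mmd_iff (hnil : ∀ i, nilradical (R i) ≠ ⊥)
    {u v : {K : Ideal (∀ i, R i) // IsComaxVertex (∀ i, R i) K}} (h : u ≠ v) :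
    MutuallyMaximallyDistant (comaxGraph (∀ i, R i)) u v ↔
      (Bs u.1 = Bs v.1 ∨
        (Bs u.1 ∩ Bs v.1 ≠ ∅ ∧ ¬ Bs u.1 ⊆ Bs v.1 ∧ ¬ Bs v.1 ⊆ Bs u.1)) := by
  constructor
  · intro hmd
    by_contra hQ
    have hne : Bs u.1 ≠ Bs v.1 := fun hh => hQ (Or.inl hh)
    by_cases hd : Bs u.1 ∩ Bs v.1 = ∅
    · exact not_maxdist hnil h (Or.inl hd) hmd.1
    by_cases hs1 : Bs u.1 ⊆ Bs v.1
    · exact not_maxdist hnil h (Or.inr ⟨hs1, hne⟩) hmd.1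
    by_cases hs2 : Bs v.1 ⊆ Bs u.1
    · exact not_maxdist hnil (Ne.symm h) (Or.inr ⟨hs2, fun hh => hne hh.symm⟩) hmd.2
    · exact hQ (Or.inr ⟨hd, hs1, hs2⟩)
  · intro hQ
    constructor
    · apply maxdist_of hnil h
      rcases hQ with h' | ⟨a, b, c⟩
      exacts [Or.inl h', Or.inr ⟨a, b⟩]
    · apply maxdist_of hnil (Ne.symm h)
      rcases hQ with h' | ⟨a, b, c⟩
      · exact Or.inl h'.symm
      · exact Or.inr ⟨by rwa [Set.inter_comm], c⟩

lemma simRel_iff {K L : Ideal (∀ i, R i)} : simRel K L ↔ Bs K = Bs L := by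
  unfold simRel
  rw [Set.ext_iff]
  apply forall_congr'
  intro i
  rw [le_nil_iff, le_nil_iff, mem_Bs, mem_Bs]

open Classical in
lemma comp_primed (K : Ideal (∀ i, R i)) (i : Fin n) :
    comp (primed K) i = if i ∈ Bs K then ⊥ else ⊤ := by
  rw [primed, comp_piIdeal]
  by_cases h : i ∈ Bs K
  · rw [if_pos (le_nil_iff.mpr h), if_pos h]
  · rw [if_neg (fun hc => h (le_nil_iff.mp hc)), if_neg h]
    exact not_not.mp h

lemma primed_sup_eq_top_iff {K L : Ideal (∀ i, R i)} :
    primed K ⊔ primed L = ⊤ ↔ Bs K ∩ Bs L = ∅ := by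
  rw [eq_top_iff_comp]
  constructor
  · intro h
    rw [Set.eq_empty_iff_forall_notMem]
    rintro i ⟨h1, h2⟩
    have hc := h i
    rw [comp_sup, comp_primed, comp_primed, if_pos h1, if_pos h2] at hc
    simp at hc
  · intro h i
    rw [comp_sup, comp_primed, comp_primed]
    rcases not_and_or.mp (Set.eq_empty_iff_forall_notMem.mp h i) with h' | h'
    · rw [if_neg h']
      simp
    · rw [if_neg h']
      simp

lemma primed_le_iff {K L : Ideal (∀ i, R i)} :
    primed K ≤ primed L ↔ Bs L ⊆ Bs K := by
  rw [le_iff_comp]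
  constructor
  · intro h i hiL
    by_contra hiK
    have hc := h i
    rw [comp_primed, comp_primed, if_neg hiK, if_pos hiL] at hc
    exact absurd (top_le_iff.mp hc) bot_ne_top
  · intro h i
    rw [comp_primed, comp_primed]
    by_cases hiL : i ∈ Bs L
    · rw [if_pos hiL, if_pos (h hiL)]
    · rw [if_neg hiL]
      exact le_top

end MMD
/-- For `R ≅ R_1 × ⋯ × R_n`, `n ≥ 2`, each `R_i` Artinian local and
not a field (`Nil(R_i) ≠ 0`): two vertices `I`, `J` of `Γ(R)` are adjacent in
`Γ(R)_SR` iff `[I] = [J]`, or `I′ + J′ ≠ R`, `I′ ⊄ J′` and `J′ ⊄ I′`; in other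
words, `Γ(R)_SR = Γ(R)′` (in particular `∂(Γ(R)) = V(Γ(R))`). -/
theorem stmt_16 (n : ℕ) (hn : 2 ≤ n) (R : Fin n → Type*) [∀ i, CommRing (R i)]
    [∀ i, IsArtinianRing (R i)] [∀ i, IsLocalRing (R i)]
    (hnil : ∀ i, nilradical (R i) ≠ ⊥) :
    boundarySet (comaxGraph (∀ i, R i)) = Set.univ ∧
    (∀ I J : {K : Ideal (∀ i, R i) // IsComaxVertex (∀ i, R i) K}, I ≠ J →
      (MutuallyMaximallyDistant (comaxGraph (∀ i, R i)) I J ↔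
        (simRel I.1 J.1 ∨
          (primed I.1 ⊔ primed J.1 ≠ ⊤ ∧ ¬ primed I.1 ≤ primed J.1 ∧
            ¬ primed J.1 ≤ primed I.1)))) := by
  refine ⟨?_, ?_⟩
  · apply Set.eq_univ_iff_forall.mpr
    intro u
    obtain ⟨v, hvu, hvB⟩ := exists_vertex hnil (Bs u.1) (Bs_nonempty u) (Bs_ne_univ u) u
    exact ⟨v, hvu, (mmd_iff hnil hvu.symm).mpr (Or.inl hvB.symm)⟩
  · intro I J hIJ
    rw [mmd_iff hnil hIJ, simRel_iff]
    simp only [ne_eq, primed_sup_eq_top_iff, primed_le_iff]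
    tauto

end CoMax
end
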